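/- arXiv:2003.07128 — 7 statements merged into one kernel-verified Lean document; each statement's English description precedes it below -/
import Mathlib

section
/- Let α ∈ [0,1) and let k be a nonzero integer. Set M_{α,k} = (1+α)·((2+α)/4)^{α/(1+α)}·|k|^{2/(1+α)}. Then for every smooth function h : ℝ → ℂ with compact support contained in (0,∞), the quantity ∫₀^∞ conj(h(x))·(−h''(x) + V_{α,k}(x)·h(x)) dx is real and is bounded below by M_{α,k}·∫₀^∞ |h(x)|² dx. -/
open MeasureTheory
open scoped ContDiff
open Topology

lemma key_amgm (α : ℝ) (hα0 : 0 ≤ α) (k : ℤ) (hk : k ≠ 0) {x : ℝ} (hx : 0 < x) :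
    (1 + α) * ((2 + α) / 4) ^ (α / (1 + α)) * |(k : ℝ)| ^ (2 / (1 + α)) ≤
      (k : ℝ) ^ 2 * x ^ (2 * α) + α * (2 + α) / (4 * x ^ 2) := by
  have h1α : (0:ℝ) < 1 + α := by linarith
  rcases eq_or_lt_of_le hα0 with hα | hα
  · subst hα
    have h2 : |(k:ℝ)| ^ ((2:ℝ) / (1 + 0)) = (k:ℝ)^2 := by
      rw [show (2:ℝ)/(1+0) = ((2:ℕ):ℝ) by norm_num, Real.rpow_natCast, sq_abs]
    have h3 : x ^ ((2:ℝ) * 0) = 1 := by norm_num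
    rw [h2, h3]; norm_num
  · have habs : (k:ℝ)^2 = |(k:ℝ)|^(2:ℝ) := by
      rw [Real.rpow_two, sq_abs]
    have hxinv : (x^2)⁻¹ = x^(-(2:ℝ)) := by
      rw [Real.rpow_neg hx.le, Real.rpow_two]
    set w₁ := 1 / (1 + α) with hw₁def
    set w₂ := α / (1 + α) with hw₂def
    have hw₁ : 0 ≤ w₁ := by positivity
    have hw₂ : 0 ≤ w₂ := by positivity
    have hw : w₁ + w₂ = 1 := by rw [hw₁def, hw₂def]; field_simp
    set p₁ := (1 + α) * ((k:ℝ)^2 * x ^ (2*α)) with hp₁def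
    set p₂ := (1 + α) * ((2 + α) / 4) * (x^2)⁻¹ with hp₂def
    have hp₁ : 0 ≤ p₁ := by positivity
    have hp₂ : 0 ≤ p₂ := by positivity
    have H := Real.geom_mean_le_arith_mean2_weighted hw₁ hw₂ hp₁ hp₂ hw
    have hR : w₁ * p₁ + w₂ * p₂ = (k:ℝ)^2 * x ^ (2*α) + α * (2 + α) / (4 * x^2) := by
      rw [hp₁def, hp₂def, hw₁def, hw₂def]; field_simp
    have e₁ : p₁ ^ w₁ = (1+α)^w₁ * |(k:ℝ)|^(2*w₁) * x^(2*α*w₁) := by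
      rw [hp₁def, habs,
        Real.mul_rpow h1α.le (by positivity),
        Real.mul_rpow (by positivity) (by positivity),
        ← Real.rpow_mul (abs_nonneg _), ← Real.rpow_mul hx.le]
      ring_nf
    have e₂ : p₂ ^ w₂ = (1+α)^w₂ * ((2+α)/4)^w₂ * x^(-(2:ℝ)*w₂) := by
      rw [hp₂def, hxinv,
        Real.mul_rpow (by positivity) (by positivity),
        Real.mul_rpow h1α.le (by positivity),
        ← Real.rpow_mul hx.le]
    have hL : p₁ ^ w₁ * p₂ ^ w₂ =
        (1 + α) * ((2 + α) / 4) ^ (α / (1 + α)) * |(k : ℝ)| ^ (2 / (1 + α)) := by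
      rw [e₁, e₂]
      have hxcol : x ^ (2*α*w₁) * x ^ ((-(2:ℝ))*w₂) = 1 := by
        rw [← Real.rpow_add hx,
          show 2*α*w₁ + (-(2:ℝ))*w₂ = 0 by rw [hw₁def, hw₂def]; field_simp; ring,
          Real.rpow_zero]
      have h1col : (1+α)^w₁ * (1+α)^w₂ = 1 + α := by
        rw [← Real.rpow_add h1α, hw, Real.rpow_one]
      have h2w : 2*w₁ = 2/(1+α) := by rw [hw₁def]; ring
      calc (1+α)^w₁ * |(k:ℝ)|^(2*w₁) * x^(2*α*w₁) *
            ((1+α)^w₂ * ((2+α)/4)^w₂ * x^((-(2:ℝ))*w₂))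
          = ((1+α)^w₁ * (1+α)^w₂) * ((2+α)/4)^w₂ * |(k:ℝ)|^(2*w₁) *
            (x ^ (2*α*w₁) * x ^ ((-(2:ℝ))*w₂)) := by ring
        _ = (1 + α) * ((2 + α) / 4) ^ (α / (1 + α)) * |(k : ℝ)| ^ (2 / (1 + α)) := by
            rw [hxcol, h1col, h2w, mul_one]
    rw [hL, hR] at H
    exact H

/-- For `α ∈ [0,1)` and a nonzero integer `k`, with
`M_{α,k} = (1+α)·((2+α)/4)^{α/(1+α)}·|k|^{2/(1+α)}`: for every smooth compactly supported
`h : ℝ → ℂ` with support contained in `(0,∞)`, the quantity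
`∫₀^∞ conj(h)·(−h'' + V_{α,k} h)` is real and bounded below by `M_{α,k}·∫₀^∞ |h|²`. -/
theorem grushin_fibre_operator_lower_bound (α : ℝ) (hα0 : 0 ≤ α) (hα1 : α < 1)
    (k : ℤ) (hk : k ≠ 0) (h : ℝ → ℂ) (hsm : ContDiff ℝ (⊤ : ℕ∞) h)
    (hcs : HasCompactSupport h) (hsupp : tsupport h ⊆ Set.Ioi 0) :
    (∫ x in Set.Ioi (0 : ℝ), (starRingEnd ℂ) (h x) *
        (-(deriv (deriv h) x) +
          (((k : ℝ) ^ 2 * x ^ (2 * α) + α * (2 + α) / (4 * x ^ 2) : ℝ) : ℂ) * h x)).im = 0 ∧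
    ((1 + α) * ((2 + α) / 4) ^ (α / (1 + α)) * |(k : ℝ)| ^ (2 / (1 + α))) *
        ∫ x in Set.Ioi (0 : ℝ), ‖h x‖ ^ 2 ≤
      (∫ x in Set.Ioi (0 : ℝ), (starRingEnd ℂ) (h x) *
        (-(deriv (deriv h) x) +
          (((k : ℝ) ^ 2 * x ^ (2 * α) + α * (2 + α) / (4 * x ^ 2) : ℝ) : ℂ) * h x)).re := by
  set V : ℝ → ℝ := fun x => (k : ℝ) ^ 2 * x ^ (2 * α) + α * (2 + α) / (4 * x ^ 2) with hVdef
  set M : ℝ := (1 + α) * ((2 + α) / 4) ^ (α / (1 + α)) * |(k : ℝ)| ^ (2 / (1 + α)) with hMdef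
  -- basic smoothness facts
  have hhc : Continuous h := hsm.continuous
  have hone : (1 : WithTop ℕ∞) ≤ ∞ := by exact_mod_cast le_top
  have hsmI : ContDiff ℝ ∞ h := hsm.of_le (by simp)
  have hd1 : ContDiff ℝ ∞ (deriv h) := (contDiff_infty_iff_deriv.mp hsmI).2
  have hd2 : ContDiff ℝ ∞ (deriv (deriv h)) := (contDiff_infty_iff_deriv.mp hd1).2
  have hconj : ContDiff ℝ ∞ (fun x => (starRingEnd ℂ) (h x)) := by
    have : ContDiff ℝ ∞ (fun z : ℂ => (starRingEnd ℂ) z) := Complex.conjCLE.contDiff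
    exact this.comp hsmI
  have h0nmem : (0 : ℝ) ∉ tsupport h := fun c => lt_irrefl 0 (Set.mem_Ioi.mp (hsupp c))
  have h00 : h 0 = 0 := image_eq_zero_of_notMem_tsupport h0nmem
  -- compact support facts
  have hcs_conj : HasCompactSupport (fun x => (starRingEnd ℂ) (h x)) :=
    hcs.comp_left (map_zero _)
  have hcs_d1 : HasCompactSupport (deriv h) := hcs.deriv
  -- integrands
  set φ₁ : ℝ → ℂ := fun x => (starRingEnd ℂ) (h x) * (-(deriv (deriv h) x)) with hφ₁def
  set A : ℝ → ℂ := fun x => (starRingEnd ℂ) (deriv h x) * deriv h x with hAdef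
  set f₂ : ℝ → ℝ := fun x => V x * ‖h x‖ ^ 2 with hf₂def
  -- integrability of φ₁ and A
  have hφ₁int : IntegrableOn φ₁ (Set.Ioi 0) :=
    ((hconj.continuous.mul hd2.continuous.neg).integrable_of_hasCompactSupport
      (hcs_conj.mul_right)).integrableOn
  have hAint : IntegrableOn A (Set.Ioi 0) :=
    (((hd1.continuous.star).mul hd1.continuous).integrable_of_hasCompactSupport
      ((hcs_d1.comp_left (star_zero _)).mul_right)).integrableOn
  -- continuity of f₂
  have hnormsq : Continuous (fun x => ‖h x‖ ^ 2) := (hhc.norm).pow 2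
  have hf₂cont : Continuous f₂ := by
    rw [continuous_iff_continuousAt]
    intro x
    by_cases hxs : x ∈ tsupport h
    · have hx : 0 < x := hsupp hxs
      have hV : ContinuousAt V x := by
        apply ContinuousAt.add
        · exact continuousAt_const.mul (Real.continuousAt_rpow_const x _ (Or.inl hx.ne'))
        · exact continuousAt_const.div (by fun_prop) (by positivity)
      exact hV.mul hnormsq.continuousAt
    · have hev : ∀ᶠ y in 𝓝 x, f₂ y = 0 := by
        filter_upwards [(isClosed_tsupport h).isOpen_compl.mem_nhds hxs] with y hy
        simp [hf₂def, image_eq_zero_of_notMem_tsupport hy]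
      exact (continuousAt_const (y := (0:ℝ))).congr
        (hev.mono fun y hy => hy.symm)
  have hf₂cs : HasCompactSupport f₂ := by
    apply hcs.mono
    intro x hx
    simp only [Function.mem_support] at hx ⊢
    intro hzero
    apply hx
    simp [hf₂def, hzero]
  have hf₂int : IntegrableOn f₂ (Set.Ioi 0) :=
    (hf₂cont.integrable_of_hasCompactSupport hf₂cs).integrableOn
  have hf₂intC : IntegrableOn (fun x => ((f₂ x : ℝ) : ℂ)) (Set.Ioi 0) := hf₂int.ofReal
  -- pointwise decomposition of the integrand
  have hψ : (fun x => (starRingEnd ℂ) (h x) *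
        (-(deriv (deriv h) x) + ((V x : ℝ) : ℂ) * h x)) =
      fun x => φ₁ x + ((f₂ x : ℝ) : ℂ) := by
    funext x
    have hcm : (starRingEnd ℂ) (h x) * h x = ((‖h x‖ ^ 2 : ℝ) : ℂ) := by
      rw [RCLike.conj_mul]; norm_cast
    simp only [hφ₁def, hf₂def]
    push_cast
    rw [mul_add]
    congr 1
    rw [show (starRingEnd ℂ) (h x) * (((V x : ℝ) : ℂ) * h x)
        = ((V x : ℝ) : ℂ) * ((starRingEnd ℂ) (h x) * h x) by ring, hcm]
    push_cast; ring
  -- integration by parts: ∫ φ₁ = ∫ A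
  have hIBP : ∫ x in Set.Ioi (0:ℝ), φ₁ x = ∫ x in Set.Ioi (0:ℝ), A x := by
    set g : ℝ → ℂ := fun x => (starRingEnd ℂ) (h x) * deriv h x with hgdef
    have hgC1 : ContDiff ℝ 1 g := (hconj.mul hd1).of_le (by norm_num)
    have hgcs : HasCompactSupport g := hcs_conj.mul_right
    have hg0 : g 0 = 0 := by simp [hgdef, h00]
    have hderivg : ∀ x, deriv g x = A x + (starRingEnd ℂ) (h x) * deriv (deriv h) x := by
      intro x
      rw [hgdef]
      rw [deriv_fun_mul ((hconj.differentiable (by simp)) x) ((hd1.differentiable (by simp)) x)]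
      have : deriv (fun x => (starRingEnd ℂ) (h x)) x = (starRingEnd ℂ) (deriv h x) := by
        simp only [starRingEnd_apply]
        exact deriv.star
      rw [this, hAdef]
    have hkey : ∫ x in Set.Ioi (0:ℝ), deriv g x = -(g 0) :=
      HasCompactSupport.integral_Ioi_deriv_eq hgC1 hgcs 0
    rw [hg0, neg_zero] at hkey
    have hBint : IntegrableOn (fun x => (starRingEnd ℂ) (h x) * deriv (deriv h) x)
        (Set.Ioi 0) :=
      ((hconj.continuous.mul hd2.continuous).integrable_of_hasCompactSupport
        (hcs_conj.mul_right)).integrableOn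
    rw [show (fun x => deriv g x) = fun x => A x + (starRingEnd ℂ) (h x) * deriv (deriv h) x
        from funext hderivg] at hkey
    rw [integral_add hAint hBint] at hkey
    have : ∫ x in Set.Ioi (0:ℝ), (starRingEnd ℂ) (h x) * deriv (deriv h) x
        = - ∫ x in Set.Ioi (0:ℝ), A x := by
      linear_combination hkey
    calc ∫ x in Set.Ioi (0:ℝ), φ₁ x
        = - ∫ x in Set.Ioi (0:ℝ), (starRingEnd ℂ) (h x) * deriv (deriv h) x := by
          rw [← integral_neg]; congr 1; funext x; simp [hφ₁def]
      _ = ∫ x in Set.Ioi (0:ℝ), A x := by rw [this, neg_neg]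
  -- ∫ A is the coercion of a real integral
  set I₁ : ℝ := ∫ x in Set.Ioi (0:ℝ), ‖deriv h x‖ ^ 2 with hI₁def
  have hAval : ∫ x in Set.Ioi (0:ℝ), A x = ((I₁ : ℝ) : ℂ) := by
    have : (fun x => A x) = fun x => ((‖deriv h x‖ ^ 2 : ℝ) : ℂ) := by
      funext x
      show (starRingEnd ℂ) (deriv h x) * deriv h x = _
      rw [RCLike.conj_mul]; norm_cast
    rw [this, hI₁def]
    exact integral_ofReal
  set I₂ : ℝ := ∫ x in Set.Ioi (0:ℝ), f₂ x with hI₂def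
  -- the main integral
  have hQ : (∫ x in Set.Ioi (0 : ℝ), (starRingEnd ℂ) (h x) *
        (-(deriv (deriv h) x) + ((V x : ℝ) : ℂ) * h x)) = ((I₁ + I₂ : ℝ) : ℂ) := by
    have hf₂val : ∫ x in Set.Ioi (0:ℝ), ((f₂ x : ℝ) : ℂ) = ((I₂ : ℝ) : ℂ) := by
      rw [hI₂def]; exact integral_ofReal
    rw [hψ, integral_add hφ₁int hf₂intC, hIBP, hAval, hf₂val]
    norm_cast
  have hI₁nonneg : 0 ≤ I₁ :=
    setIntegral_nonneg measurableSet_Ioi fun x _ => sq_nonneg _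
  have hI₂ge : M * (∫ x in Set.Ioi (0:ℝ), ‖h x‖ ^ 2) ≤ I₂ := by
    have hMint : IntegrableOn (fun x => M * ‖h x‖ ^ 2) (Set.Ioi 0) := by
      refine ((continuous_const.mul hnormsq).integrable_of_hasCompactSupport ?_).integrableOn
      apply hcs.mono
      intro x hx
      simp only [Function.mem_support] at hx ⊢
      intro hzero; apply hx; simp [hzero]
    have hmono := setIntegral_mono_on hMint hf₂int measurableSet_Ioi
      (fun x hx => by
        have := key_amgm α hα0 k hk (Set.mem_Ioi.mp hx)
        exact mul_le_mul_of_nonneg_right this (sq_nonneg _))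
    rwa [integral_const_mul] at hmono
  refine ⟨?_, ?_⟩
  · rw [hQ]; exact Complex.ofReal_im _
  · rw [hQ, Complex.ofReal_re]
    linarith
end

section
/- Let α ∈ (0,1) and let k be a nonzero integer. Then Φ_{α,k} is square integrable on (0,∞) and ∫₀^∞ Φ_{α,k}(x)² dx = π · (1+α)^{(1−α)/(1+α)} · Γ((1−α)/(1+α)) · (2|k|)^{−2/(1+α)}, where Γ denotes the Euler Gamma function. -/
/-!
Squaring removes the square root and turns `Φ_{α,k}(x)²` into a constant multiple of
`x^{-α} e^{-b x^{1+α}}` with `b = 2|k|/(1+α)`. The substitution `u = b x^{1+α}` turns its integral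
over `(0,∞)` into `b^{-t}(1+α)^{-1} Γ(t)` with `t = (1-α)/(1+α)`, which is Mathlib's
`integral_rpow_mul_exp_neg_mul_rpow`; the rest is bookkeeping of powers.
-/

open MeasureTheory

/-- The function `Φ_{α,k}(x) = √(π(1+α)/(2|k|)) · x^{−α/2} · exp(−|k|x^{1+α}/(1+α))`. -/
noncomputable def PhiG (α : ℝ) (k : ℤ) (x : ℝ) : ℝ :=
  Real.sqrt (Real.pi * (1 + α) / (2 * |(k : ℝ)|)) * x ^ (-(α / 2)) *
    Real.exp (-(|(k : ℝ)| * x ^ (1 + α) / (1 + α)))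

open Real Set

lemma PhiG_sq (α : ℝ) (k : ℤ) (hα : 0 ≤ 1 + α) {x : ℝ} (hx : 0 < x) :
    PhiG α k x ^ 2 = π * (1 + α) / (2 * |(k : ℝ)|) *
      (x ^ (-α) * exp (-(2 * |(k : ℝ)| / (1 + α)) * x ^ (1 + α))) := by
  have hC : 0 ≤ π * (1 + α) / (2 * |(k : ℝ)|) := by positivity
  rw [PhiG, mul_pow, mul_pow, sq_sqrt hC, ← rpow_natCast, ← rpow_mul hx.le, ← exp_nat_mul,
    mul_assoc]
  congr 3 <;> push_cast <;> ring

lemma div_mul_div_rpow_neg_mul_one_div {s p : ℝ} (hs : 0 < s) (hp : 0 < p) (t : ℝ) :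
    p / s * ((s / p) ^ (-t) * (1 / p)) = p ^ t * s ^ (-(t + 1)) := by
  rw [div_rpow hs.le hp.le, rpow_neg hs.le, rpow_neg hp.le, neg_add, rpow_add hs, rpow_neg_one,
    rpow_neg hs.le]
  field_simp

/-- For `α ∈ (0,1)` and a nonzero integer `k`, the function `Φ_{α,k}` is
square integrable on `(0,∞)` and
`∫₀^∞ Φ_{α,k}(x)² dx = π·(1+α)^{(1−α)/(1+α)}·Γ((1−α)/(1+α))·(2|k|)^{−2/(1+α)}`. -/
theorem PhiG_norm_squared (α : ℝ) (hα0 : 0 < α) (hα1 : α < 1) (k : ℤ) (hk : k ≠ 0) :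
    IntegrableOn (fun x : ℝ => PhiG α k x ^ 2) (Set.Ioi 0) ∧
    ∫ x in Set.Ioi (0 : ℝ), PhiG α k x ^ 2 =
      Real.pi * (1 + α) ^ ((1 - α) / (1 + α)) * Real.Gamma ((1 - α) / (1 + α)) *
        (2 * |(k : ℝ)|) ^ (-(2 / (1 + α))) := by
  have hp : 0 < 1 + α := by linarith
  have hq : -1 < -α := by linarith
  have hs : 0 < 2 * |(k : ℝ)| := by positivity
  have hb : 0 < 2 * |(k : ℝ)| / (1 + α) := div_pos hs hp
  have hsq : EqOn (fun x => PhiG α k x ^ 2) _ (Ioi 0) := fun x hx => PhiG_sq α k hp.le hx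
  refine ⟨(integrableOn_congr_fun hsq measurableSet_Ioi).2
    ((integrableOn_rpow_mul_exp_neg_mul_rpow hq hp hb).const_mul _), ?_⟩
  rw [setIntegral_congr_fun measurableSet_Ioi hsq, integral_const_mul,
    integral_rpow_mul_exp_neg_mul_rpow hp hq hb, neg_div, ← mul_assoc, mul_div_assoc,
    mul_assoc π, div_mul_div_rpow_neg_mul_one_div hs hp,
    show (-α + 1) / (1 + α) = (1 - α) / (1 + α) by ring,
    show (1 - α) / (1 + α) + 1 = 2 / (1 + α) by field_simp; ring]
  ring
end

section
/- Let α ∈ (0,1) and let k be a nonzero integer. If u : (0,∞) → ℂ is twice differentiable, satisfies −u''(x) + (k²x^{2α} + α(2+α)/(4x²))·u(x) = 0 for every x > 0, and is square integrable on (0,∞), then there exists a constant c ∈ ℂ such that u(x) = c·Φ_{α,k}(x) for all x > 0. (This expresses that the kernel of the adjoint A_α(k)* is the one-dimensional span of Φ_{α,k}.) -/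
/-!
`φ = PhiG α k` is a positive solution of `φ'' = V φ` with `V x = k² x^{2α} + α(2+α)/(4x²)`,
bounded on `[1, ∞)` by some `C`. For a solution `u` the Wronskian `W = u' φ - u φ'` is
constant, so `(u / φ)' = W / φ²`. If `W = 0` then `u / φ` is constant. Otherwise
`w = Re (u / (W φ))` has `w' = φ⁻² ≥ C⁻²`, so `w → ∞` and `(φ w)⁻² = (-w⁻¹)'` is integrable
near `∞`; since `(φ w)² + (φ w)⁻² ≥ 2`, the function `(φ w)²` is not, and neither is
`‖u‖² ≥ ‖W‖² (φ w)²`.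
-/

open MeasureTheory

open Set Filter Topology

theorem two_le_add_inv {t : ℝ} (ht : 0 < t) : 2 ≤ t + t⁻¹ := by
  rw [← sub_nonneg, show t + t⁻¹ - 2 = (t - 1) ^ 2 / t by field_simp; ring]
  positivity

section InvSqAntiderivative

variable {φ w : ℝ → ℝ} {a C : ℝ}

theorem tendsto_atTop_of_hasDerivAt_inv_sq (hφ0 : ∀ x ∈ Ioi a, 0 < φ x)
    (hφC : ∀ x ∈ Ioi a, φ x ≤ C) (hw : ∀ x ∈ Ioi a, HasDerivAt w (φ x ^ 2)⁻¹ x) :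
    Tendsto w atTop atTop := by
  have hb : a + 1 ∈ Ioi a := by simp
  have hderiv_ge : ∀ x ∈ interior (Ioi a), (C ^ 2)⁻¹ ≤ deriv w x := by
    intro x hx
    rw [interior_Ioi] at hx
    rw [(hw x hx).deriv]
    have := hφ0 x hx
    gcongr
    exact hφC x hx
  have hgrowth : ∀ y ∈ Ici (a + 1), w (a + 1) + (C ^ 2)⁻¹ * (y - (a + 1)) ≤ w y := fun y hy => by
    have := (convex_Ioi a).mul_sub_le_image_sub_of_le_deriv
      (fun x hx => (hw x hx).continuousAt.continuousWithinAt)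
      (fun x hx => (hw x (interior_subset hx)).differentiableAt.differentiableWithinAt)
      hderiv_ge _ hb y (hb.out.trans_le hy) hy
    linarith
  refine tendsto_atTop_mono' _ (eventually_atTop.2 ⟨a + 1, hgrowth⟩) ?_
  have hC : 0 < C := (hφ0 _ hb).trans_le (hφC _ hb)
  exact tendsto_atTop_add_const_left _ _
    ((tendsto_atTop_add_const_right _ _ tendsto_id).const_mul_atTop (by positivity))

theorem not_integrableOn_sq_mul_of_hasDerivAt_inv_sq
    (hφ0 : ∀ x ∈ Ioi a, 0 < φ x) (hφC : ∀ x ∈ Ioi a, φ x ≤ C)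
    (hw : ∀ x ∈ Ioi a, HasDerivAt w (φ x ^ 2)⁻¹ x) :
    ¬ IntegrableOn (fun x => (φ x * w x) ^ 2) (Ioi a) := by
  intro hint
  have hw_top := tendsto_atTop_of_hasDerivAt_inv_sq hφ0 hφC hw
  obtain ⟨X, hX⟩ := eventually_atTop.1 (hw_top.eventually_gt_atTop 0)
  set b := max X (a + 1)
  have hba : Ici b ⊆ Ioi a := fun x hx => by
    simp only [mem_Ici, b, max_le_iff] at hx; simp only [mem_Ioi]; linarith
  have hwb : ∀ x ∈ Ici b, 0 < w x := fun x hx => hX x ((le_max_left _ _).trans hx)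
  have hinv : IntegrableOn (fun x => ((φ x * w x) ^ 2)⁻¹) (Ioi b) := by
    refine integrableOn_Ioi_deriv_of_nonneg' (g := fun x => -(w x)⁻¹) (l := 0)
      (fun x hx => ?_) (fun x _ => by positivity) (by simpa using hw_top.inv_tendsto_atTop.neg)
    exact ((hw x (hba hx)).inv (hwb x hx).ne').neg.congr_deriv (by field_simp)
  have hsum := (hint.mono_set (Ioi_subset_Ici_self.trans hba)).add hinv
  have htwo : IntegrableOn (fun _ => (2 : ℝ)) (Ioi b) := by
    refine hsum.mono' (by fun_prop) (ae_restrict_of_forall_mem measurableSet_Ioi fun x hx => ?_)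
    have hx' : x ∈ Ici b := Ioi_subset_Ici_self hx
    have : 0 < (φ x * w x) ^ 2 := by have := hφ0 x (hba hx'); have := hwb x hx'; positivity
    simpa using two_le_add_inv this
  simp [integrableOn_const_iff] at htwo

end InvSqAntiderivative

theorem exists_eq_const_of_hasDerivAt_zero {E : Type*} [NormedAddCommGroup E] [NormedSpace ℝ E]
    {F : ℝ → E} {a : ℝ} (h : ∀ x ∈ Ioi a, HasDerivAt F 0 x) :
    ∃ c, ∀ x ∈ Ioi a, F x = c :=
  isOpen_Ioi.exists_is_const_of_deriv_eq_zero isPreconnected_Ioi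
    (fun x hx => (h x hx).differentiableAt.differentiableWithinAt) (fun x hx => (h x hx).deriv)

section Wronskian

variable {V φ φ' : ℝ → ℝ} {u u' : ℝ → ℂ} {x : ℝ}

theorem hasDerivAt_wronskian (hu : HasDerivAt u (u' x) x) (hu' : HasDerivAt u' (V x * u x) x)
    (hφ : HasDerivAt φ (φ' x) x) (hφ' : HasDerivAt φ' (V x * φ x) x) :
    HasDerivAt (fun y => u' y * φ y - u y * φ' y) 0 x := by
  refine (hu'.mul hφ.ofReal_comp).sub (hu.mul hφ'.ofReal_comp) |>.congr_deriv ?_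
  push_cast
  ring

variable (hφ0 : ∀ x ∈ Ioi 0, 0 < φ x) (hφ : ∀ x ∈ Ioi 0, HasDerivAt φ (φ' x) x)
  (hφ' : ∀ x ∈ Ioi 0, HasDerivAt φ' (V x * φ x) x) (hu : ∀ x ∈ Ioi 0, HasDerivAt u (u' x) x)
  (hu' : ∀ x ∈ Ioi 0, HasDerivAt u' (V x * u x) x)
include hφ0 hφ hφ' hu hu'

theorem exists_hasDerivAt_div_eq_const_div_sq :
    ∃ c : ℂ, ∀ x ∈ Ioi 0, HasDerivAt (fun y => u y / φ y) (c / (φ x : ℂ) ^ 2) x := by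
  obtain ⟨c, hc⟩ := exists_eq_const_of_hasDerivAt_zero fun x hx =>
    hasDerivAt_wronskian (hu x hx) (hu' x hx) (hφ x hx) (hφ' x hx)
  exact ⟨c, fun x hx => hc x hx ▸
    (hu x hx).div (hφ x hx).ofReal_comp (by exact_mod_cast (hφ0 x hx).ne')⟩

theorem exists_eq_mul_of_integrableOn_norm_sq {C : ℝ} (hφC : ∀ x ∈ Ioi 1, φ x ≤ C)
    (hL2 : IntegrableOn (fun x => ‖u x‖ ^ 2) (Ioi 1)) :
    ∃ c : ℂ, ∀ x ∈ Ioi 0, u x = c * φ x := by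
  obtain ⟨c, hc⟩ := exists_hasDerivAt_div_eq_const_div_sq hφ0 hφ hφ' hu hu'
  have hφ0' : ∀ x ∈ Ioi 0, (φ x : ℂ) ≠ 0 := fun x hx => by exact_mod_cast (hφ0 x hx).ne'
  by_cases hc0 : c = 0
  · obtain ⟨d, hd⟩ := exists_eq_const_of_hasDerivAt_zero fun x hx => by simpa [hc0] using hc x hx
    exact ⟨d, fun x hx => by rw [← hd x hx, div_mul_cancel₀ _ (hφ0' x hx)]⟩
  exfalso
  set w := fun x => (u x / φ x / c).re
  have hw : ∀ x ∈ Ioi 1, HasDerivAt w (φ x ^ 2)⁻¹ x := fun x hx => by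
    refine (Complex.reCLM.hasFDerivAt.comp_hasDerivAt x
      ((hc x (mem_Ioi.2 (one_pos.trans hx))).div_const c)).congr_deriv ?_
    rw [Complex.reCLM_apply, div_div_cancel_left' hc0, ← Complex.ofReal_pow, ← Complex.ofReal_inv,
      Complex.ofReal_re]
  refine not_integrableOn_sq_mul_of_hasDerivAt_inv_sq
    (fun x hx => hφ0 x (mem_Ioi.2 (one_pos.trans hx))) hφC hw ?_
  refine (hL2.const_mul (‖c‖ ^ 2)⁻¹).mono' ?_
    (ae_restrict_of_forall_mem measurableSet_Ioi fun x hx => ?_)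
  · have hφc : ContinuousOn φ (Ioi 1) := fun x hx =>
      (hφ x (mem_Ioi.2 (one_pos.trans hx))).continuousAt.continuousWithinAt
    exact ((hφc.mul fun x hx => (hw x hx).continuousAt.continuousWithinAt).pow
      2).aestronglyMeasurable measurableSet_Ioi
  · have hx0 : 0 < φ x := hφ0 x (mem_Ioi.2 (one_pos.trans hx))
    have hnorm : ‖u x‖ = ‖c‖ * (φ x * ‖u x / φ x / c‖) := by
      rw [norm_div, norm_div, Complex.norm_real, Real.norm_of_nonneg hx0.le]
      field_simp
    have hre : |w x| ≤ ‖u x / φ x / c‖ := Complex.abs_re_le_norm _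
    calc ‖(φ x * w x) ^ 2‖ = (φ x * |w x|) ^ 2 := by
          rw [norm_pow, norm_mul, Real.norm_of_nonneg hx0.le, Real.norm_eq_abs]
      _ ≤ (φ x * ‖u x / φ x / c‖) ^ 2 := by gcongr
      _ = (‖c‖ ^ 2)⁻¹ * ‖u x‖ ^ 2 := by
          rw [hnorm]
          field_simp

end Wronskian

section PhiG

variable {α x : ℝ}

theorem PhiG_pos (hα : -1 < α) {k : ℤ} (hk : k ≠ 0) (hx : 0 < x) : 0 < PhiG α k x := by
  have : 0 < 1 + α := by linarith
  have : 0 < |(k : ℝ)| := by positivity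
  unfold PhiG
  positivity

theorem PhiG_le_of_one_le (hα : 0 ≤ α) (k : ℤ) (hx : 1 ≤ x) :
    PhiG α k x ≤ Real.sqrt (Real.pi * (1 + α) / (2 * |(k : ℝ)|)) := by
  have hpow : x ^ (-(α / 2)) ≤ 1 := Real.rpow_le_one_of_one_le_of_nonpos hx (by linarith)
  have hexp : Real.exp (-(|(k : ℝ)| * x ^ (1 + α) / (1 + α))) ≤ 1 := by
    rw [Real.exp_le_one_iff, neg_nonpos]
    positivity
  unfold PhiG
  calc _ ≤ Real.sqrt (Real.pi * (1 + α) / (2 * |(k : ℝ)|)) * 1 * 1 := by gcongr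
    _ = _ := by ring

theorem hasDerivAt_PhiG (hα : 1 + α ≠ 0) (k : ℤ) (hx : 0 < x) :
    HasDerivAt (PhiG α k) ((-(α / 2) * x⁻¹ - |(k : ℝ)| * x ^ α) * PhiG α k x) x := by
  have hpow : HasDerivAt (fun y => y ^ (1 + α)) ((1 + α) * x ^ α) x := by
    simpa using Real.hasDerivAt_rpow_const (p := 1 + α) (Or.inl hx.ne')
  refine (((Real.hasDerivAt_rpow_const (p := -(α / 2)) (Or.inl hx.ne')).const_mul _).mul
    ((hpow.const_mul |(k : ℝ)|).div_const (1 + α)).neg.exp).congr_deriv ?_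
  simp only [Pi.neg_apply, Real.rpow_sub_one hx.ne']
  unfold PhiG
  field_simp
  ring

theorem hasDerivAt_deriv_PhiG (hα : 1 + α ≠ 0) (k : ℤ) (hx : 0 < x) :
    HasDerivAt (fun y => (-(α / 2) * y⁻¹ - |(k : ℝ)| * y ^ α) * PhiG α k y)
      (((k : ℝ) ^ 2 * x ^ (2 * α) + α * (2 + α) / (4 * x ^ 2)) * PhiG α k x) x := by
  refine ((((hasDerivAt_inv hx.ne').const_mul _).sub
    ((Real.hasDerivAt_rpow_const (Or.inl hx.ne')).const_mul _)).mul
    (hasDerivAt_PhiG hα k hx)).congr_deriv ?_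
  simp only [Pi.sub_apply]
  rw [Real.rpow_sub_one hx.ne', mul_comm 2 α, Real.rpow_mul hx.le, Real.rpow_two, ← sq_abs (k : ℝ)]
  field_simp
  ring

end PhiG

theorem kernel_adjoint_spanned_by_PhiG_general (α : ℝ) (hα0 : 0 < α)
    (k : ℤ) (hk : k ≠ 0) (u : ℝ → ℂ)
    (hu1 : ∀ x : ℝ, 0 < x → DifferentiableAt ℝ u x)
    (hu2 : ∀ x : ℝ, 0 < x → DifferentiableAt ℝ (deriv u) x)
    (hODE : ∀ x : ℝ, 0 < x →
      -(deriv (deriv u) x) +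
        (((k : ℝ) ^ 2 * x ^ (2 * α) + α * (2 + α) / (4 * x ^ 2) : ℝ) : ℂ) * u x = 0)
    (hL2 : IntegrableOn (fun x : ℝ => ‖u x‖ ^ 2) (Set.Ioi 0)) :
    ∃ c : ℂ, ∀ x : ℝ, 0 < x → u x = c * (PhiG α k x : ℂ) := by
  have hα : 1 + α ≠ 0 := by positivity
  exact exists_eq_mul_of_integrableOn_norm_sq
    (V := fun x => (k : ℝ) ^ 2 * x ^ (2 * α) + α * (2 + α) / (4 * x ^ 2))
    (fun x hx => PhiG_pos (by linarith) hk hx) (fun x hx => hasDerivAt_PhiG hα k hx)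
    (fun x hx => hasDerivAt_deriv_PhiG hα k hx) (fun x hx => (hu1 x hx).hasDerivAt)
    (fun x hx => (hu2 x hx).hasDerivAt.congr_deriv (by linear_combination -hODE x hx))
    (fun x hx => PhiG_le_of_one_le hα0.le k hx.out.le) (hL2.mono_set (Ioi_subset_Ioi zero_le_one))

/-- For `α ∈ (0,1)` and a nonzero integer `k`: any twice differentiable
`u : (0,∞) → ℂ` solving `−u'' + (k²x^{2α} + α(2+α)/(4x²))u = 0` on `(0,∞)` which is square
integrable on `(0,∞)` is a constant multiple of `Φ_{α,k}` (the kernel of `A_α(k)*` is the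
one-dimensional span of `Φ_{α,k}`). -/
theorem kernel_adjoint_spanned_by_PhiG (α : ℝ) (hα0 : 0 < α) (hα1 : α < 1)
    (k : ℤ) (hk : k ≠ 0) (u : ℝ → ℂ)
    (hu1 : ∀ x : ℝ, 0 < x → DifferentiableAt ℝ u x)
    (hu2 : ∀ x : ℝ, 0 < x → DifferentiableAt ℝ (deriv u) x)
    (hODE : ∀ x : ℝ, 0 < x →
      -(deriv (deriv u) x) +
        (((k : ℝ) ^ 2 * x ^ (2 * α) + α * (2 + α) / (4 * x ^ 2) : ℝ) : ℂ) * u x = 0)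
    (hL2 : IntegrableOn (fun x : ℝ => ‖u x‖ ^ 2) (Set.Ioi 0)) :
    ∃ c : ℂ, ∀ x : ℝ, 0 < x → u x = c * (PhiG α k x : ℂ) :=
  kernel_adjoint_spanned_by_PhiG_general α hα0 k hk u hu1 hu2 hODE hL2
end

section
/- Let α ∈ (0,1) and let k be a nonzero integer. Then the Wronskian of Φ_{α,k} and F_{α,k} is constant and equals 1+α: for every x > 0, Φ_{α,k}(x)·F_{α,k}'(x) − Φ_{α,k}'(x)·F_{α,k}(x) = 1+α. -/
/-- The function `F_{α,k}(x) = √(2(1+α)/(π|k|)) · x^{−α/2} · sinh(|k|x^{1+α}/(1+α))`. -/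
noncomputable def FG (α : ℝ) (k : ℤ) (x : ℝ) : ℝ :=
  Real.sqrt (2 * (1 + α) / (Real.pi * |(k : ℝ)|)) * x ^ (-(α / 2)) *
    Real.sinh (|(k : ℝ)| * x ^ (1 + α) / (1 + α))

/-!
Both functions have the form `A · x^{−α/2} · g(u(x))` with `u(x) = |k| x^{1+α}/(1+α)`.
A common factor `p` multiplies the Wronskian by `p²`, and the Wronskian of `exp(−u)` and
`sinh u` is `u'·exp(−u)(cosh u + sinh u) = u'`. So the Wronskian is
`A B x^{−α} · |k| x^α = A B |k|`, and the two normalising square roots multiply to `(1+α)/|k|`.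
-/

noncomputable def wronskian (f g : ℝ → ℝ) (x : ℝ) : ℝ :=
  f x * deriv g x - deriv f x * g x

theorem wronskian_const_mul_mul {p g h : ℝ → ℝ} {x : ℝ} (a b : ℝ) (hp : DifferentiableAt ℝ p x)
    (hg : DifferentiableAt ℝ g x) (hh : DifferentiableAt ℝ h x) :
    wronskian (fun y => a * p y * g y) (fun y => b * p y * h y) x =
      a * b * p x ^ 2 * wronskian g h x := by
  have hpg : HasDerivAt (fun y => a * p y * g y) (a * deriv p x * g x + a * p x * deriv g x) x :=
    (hp.hasDerivAt.const_mul a).mul hg.hasDerivAt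
  have hph : HasDerivAt (fun y => b * p y * h y) (b * deriv p x * h x + b * p x * deriv h x) x :=
    (hp.hasDerivAt.const_mul b).mul hh.hasDerivAt
  rw [wronskian, hpg.deriv, hph.deriv, wronskian]
  ring

theorem wronskian_exp_neg_sinh {u : ℝ → ℝ} {x : ℝ} (hu : DifferentiableAt ℝ u x) :
    wronskian (fun y => Real.exp (-u y)) (fun y => Real.sinh (u y)) x = deriv u x := by
  have hexp : HasDerivAt (fun y => Real.exp (-u y)) (Real.exp (-u x) * -deriv u x) x :=
    hu.hasDerivAt.neg.exp
  rw [wronskian, hexp.deriv, hu.hasDerivAt.sinh.deriv]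
  calc Real.exp (-u x) * (Real.cosh (u x) * deriv u x)
        - Real.exp (-u x) * -deriv u x * Real.sinh (u x)
      = deriv u x * (Real.exp (-u x) * (Real.cosh (u x) + Real.sinh (u x))) := by ring
    _ = deriv u x := by
      rw [Real.cosh_add_sinh, ← Real.exp_add, neg_add_cancel, Real.exp_zero, mul_one]

theorem hasDerivAt_const_mul_rpow_add_one_div {r : ℝ} (c : ℝ) (hr : r + 1 ≠ 0) {x : ℝ}
    (hx : x ≠ 0) : HasDerivAt (fun y => c * y ^ (r + 1) / (r + 1)) (c * x ^ r) x := by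
  have h := ((Real.hasDerivAt_rpow_const (p := r + 1) (Or.inl hx)).const_mul c).div_const (r + 1)
  rwa [add_sub_cancel_right, mul_left_comm, mul_div_cancel_left₀ _ hr] at h

theorem rpow_neg_half_sq_mul_rpow {x : ℝ} (hx : 0 < x) (r : ℝ) :
    (x ^ (-(r / 2))) ^ 2 * x ^ r = 1 := by
  rw [← Real.rpow_natCast, ← Real.rpow_mul hx.le, ← Real.rpow_add hx]
  norm_num

theorem sqrt_mul_sqrt_pi_div {t c : ℝ} (ht : 0 ≤ t) (hc : 0 < c) :
    Real.sqrt (Real.pi * t / (2 * c)) * Real.sqrt (2 * t / (Real.pi * c)) = t / c := by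
  rw [← Real.sqrt_mul (by positivity), ← Real.sqrt_sq (by positivity : 0 ≤ t / c)]
  congr 1
  field_simp

theorem wronskian_PhiG_FG_general (α : ℝ) (hα0 : 0 < α) (k : ℤ) (hk : k ≠ 0) :
    ∀ x : ℝ, 0 < x →
      PhiG α k x * deriv (FG α k) x - deriv (PhiG α k) x * FG α k x = 1 + α := by
  intro x hx
  set c : ℝ := |(k : ℝ)|
  have hc : 0 < c := abs_pos.mpr (Int.cast_ne_zero.mpr hk)
  have hα : 0 < 1 + α := by linarith
  set u : ℝ → ℝ := fun y => c * y ^ (1 + α) / (1 + α)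
  have hu : HasDerivAt u (c * x ^ α) x := by
    simpa only [add_comm α] using
      hasDerivAt_const_mul_rpow_add_one_div c (by linarith : α + 1 ≠ 0) hx.ne'
  have hp : DifferentiableAt ℝ (fun y : ℝ => y ^ (-(α / 2))) x :=
    Real.differentiableAt_rpow_const_of_ne _ hx.ne'
  change wronskian (fun y => _ * y ^ (-(α / 2)) * Real.exp (-u y))
    (fun y => _ * y ^ (-(α / 2)) * Real.sinh (u y)) x = 1 + α
  rw [wronskian_const_mul_mul _ _ hp (hu.differentiableAt.neg.exp (f := fun y => -u y))
      hu.differentiableAt.sinh,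
    wronskian_exp_neg_sinh hu.differentiableAt, hu.deriv, sqrt_mul_sqrt_pi_div hα.le hc]
  calc (1 + α) / c * (x ^ (-(α / 2))) ^ 2 * (c * x ^ α)
      = (1 + α) / c * c * ((x ^ (-(α / 2))) ^ 2 * x ^ α) := by ring
    _ = 1 + α := by rw [rpow_neg_half_sq_mul_rpow hx, div_mul_cancel₀ _ hc.ne', mul_one]

/-- For `α ∈ (0,1)` and a nonzero integer `k`, the Wronskian of `Φ_{α,k}`
and `F_{α,k}` is constant and equals `1+α`. -/
theorem wronskian_PhiG_FG (α : ℝ) (hα0 : 0 < α) (hα1 : α < 1) (k : ℤ) (hk : k ≠ 0) :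
    ∀ x : ℝ, 0 < x →
      PhiG α k x * deriv (FG α k) x - deriv (PhiG α k) x * FG α k x = 1 + α :=
  wronskian_PhiG_FG_general α hα0 k hk
end

section
/- Let α ∈ (0,1), let k be a nonzero integer, and let g : ℝ → ℂ be continuous with compact support contained in (0,∞). Then the function u(r) := ∫₀^∞ G_{α,k}(r,ρ)·g(ρ) dρ is well defined and twice differentiable on (0,∞), and it satisfies −u''(r) + (k²r^{2α} + α(2+α)/(4r²))·u(r) = g(r) for every r > 0. -/
open MeasureTheory

noncomputable def GreenG (α : ℝ) (k : ℤ) (r ρ : ℝ) : ℝ :=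
  if ρ < r then (1 + α)⁻¹ * PhiG α k r * FG α k ρ else (1 + α)⁻¹ * FG α k r * PhiG α k ρ

/-!
The substitution `t = κ x^{1+α}/(1+α)`, `w(x) = x^{-α/2} E(t)` with `κ = |k|` turns the
homogeneous equation `-w'' + (k² x^{2α} + α(2+α)/(4x²)) w = 0` into `E'' = E`. Hence `Φ_{α,k}`
(from `E = e^{-t}`) and `F_{α,k}` (from `E = sinh t`) solve it, and their Wronskian is the
constant `1 + α`. The kernel `G_{α,k}` is therefore the variation-of-parameters kernel, and with
`u(r) = (1+α)⁻¹ (Φ(r) ∫₀ʳ F g + F(r) ∫ᵣ^∞ Φ g)` the boundary terms cancel in `u'` while in `u''`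
they produce `-g` through the Wronskian.
-/

open Set Filter Topology

noncomputable def liouvilleProfile (α κ : ℝ) (E : ℝ → ℝ) (x : ℝ) : ℝ :=
  x ^ (-(α / 2)) * E (κ * x ^ (1 + α) / (1 + α))

noncomputable def liouvilleProfileDeriv (α κ : ℝ) (E E' : ℝ → ℝ) (x : ℝ) : ℝ :=
  -(α / 2) / x * liouvilleProfile α κ E x + κ * x ^ α * liouvilleProfile α κ E' x

noncomputable def liouvillePotential (α κ x : ℝ) : ℝ :=
  κ ^ 2 * x ^ (2 * α) + α * (2 + α) / (4 * x ^ 2)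

section LiouvilleProfile

variable {α κ x : ℝ} {E E' : ℝ → ℝ}

lemma hasDerivAt_liouvilleVariable (hα : 1 + α ≠ 0) (hx : 0 < x) :
    HasDerivAt (fun x : ℝ => κ * x ^ (1 + α) / (1 + α)) (κ * x ^ α) x := by
  refine (((Real.hasDerivAt_rpow_const (p := 1 + α) (Or.inl hx.ne')).const_mul κ).div_const
    (1 + α)).congr_deriv ?_
  rw [add_sub_cancel_left]
  field_simp

lemma hasDerivAt_liouvilleProfile (hα : 1 + α ≠ 0) (hE : ∀ y, HasDerivAt E (E' y) y)
    (hx : 0 < x) :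
    HasDerivAt (liouvilleProfile α κ E) (liouvilleProfileDeriv α κ E E' x) x := by
  have hpow : HasDerivAt (fun x : ℝ => x ^ (-(α / 2))) (-(α / 2) / x * x ^ (-(α / 2))) x := by
    refine (Real.hasDerivAt_rpow_const (p := -(α / 2)) (Or.inl hx.ne')).congr_deriv ?_
    rw [Real.rpow_sub hx, Real.rpow_one]
    ring
  refine (hpow.mul ((hE _).comp x (hasDerivAt_liouvilleVariable hα hx))).congr_deriv ?_
  simp only [liouvilleProfileDeriv, liouvilleProfile, Function.comp_apply]
  ring

lemma hasDerivAt_liouvilleProfileDeriv (hα : 1 + α ≠ 0) (hE : ∀ y, HasDerivAt E (E' y) y)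
    (hE' : ∀ y, HasDerivAt E' (E y) y) (hx : 0 < x) :
    HasDerivAt (liouvilleProfileDeriv α κ E E')
      (liouvillePotential α κ x * liouvilleProfile α κ E x) x := by
  have hcoeff : HasDerivAt (fun x : ℝ => -(α / 2) / x) (α / 2 / x ^ 2) x := by
    refine ((hasDerivAt_const x (-(α / 2))).div (hasDerivAt_id x) hx.ne').congr_deriv ?_
    simp
  have hpow : HasDerivAt (fun x : ℝ => κ * x ^ α) (κ * α * x ^ α / x) x := by
    refine ((Real.hasDerivAt_rpow_const (p := α) (Or.inl hx.ne')).const_mul κ).congr_deriv ?_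
    rw [Real.rpow_sub hx, Real.rpow_one]
    ring
  refine ((hcoeff.mul (hasDerivAt_liouvilleProfile hα hE hx)).add
    (hpow.mul (hasDerivAt_liouvilleProfile hα hE' hx))).congr_deriv ?_
  simp only [liouvilleProfileDeriv, liouvillePotential]
  rw [two_mul, Real.rpow_add hx]
  ring

lemma liouvilleProfile_wronskian {G G' : ℝ → ℝ} (hx : 0 < x) :
    liouvilleProfile α κ E x * liouvilleProfileDeriv α κ G G' x
        - liouvilleProfileDeriv α κ E E' x * liouvilleProfile α κ G x
      = κ * (E (κ * x ^ (1 + α) / (1 + α)) * G' (κ * x ^ (1 + α) / (1 + α))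
          - E' (κ * x ^ (1 + α) / (1 + α)) * G (κ * x ^ (1 + α) / (1 + α))) := by
  have hpow : x ^ α * (x ^ (-(α / 2)) * x ^ (-(α / 2))) = 1 := by
    rw [← Real.rpow_add hx, ← Real.rpow_add hx]
    ring_nf
    exact Real.rpow_zero x
  simp only [liouvilleProfileDeriv, liouvilleProfile]
  linear_combination κ * (E (κ * x ^ (1 + α) / (1 + α)) * G' (κ * x ^ (1 + α) / (1 + α))
    - E' (κ * x ^ (1 + α) / (1 + α)) * G (κ * x ^ (1 + α) / (1 + α))) * hpow

end LiouvilleProfile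

lemma continuous_ofReal_mul_of_tsupport_subset {h : ℝ → ℝ} {g : ℝ → ℂ} {U : Set ℝ}
    (hh : ContinuousOn h U) (hU : IsOpen U) (hg : Continuous g) (hgU : tsupport g ⊆ U) :
    Continuous fun ρ => (h ρ : ℂ) * g ρ :=
  ContinuousOn.continuous_of_tsupport_subset
    ((Complex.continuous_ofReal.comp_continuousOn hh).mul hg.continuousOn) hU
    (tsupport_mul_subset_right.trans hgU)

lemma hasDerivAt_setIntegral_Ioi {E : Type*} [NormedAddCommGroup E] [NormedSpace ℝ E]
    [CompleteSpace E] {h : ℝ → E} (hi : Integrable h) (hc : Continuous h) (r : ℝ) :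
    HasDerivAt (fun r => ∫ x in Ioi r, h x) (-h r) r := by
  have hsplit : (fun r => ∫ x in Ioi r, h x) = fun r => (∫ x in Ioi 0, h x) - ∫ x in 0..r, h x :=
    funext fun r => eq_sub_of_add_eq'
      (intervalIntegral.integral_interval_add_Ioi hi.integrableOn hi.integrableOn)
  rw [hsplit]
  simpa using (hc.integral_hasStrictDerivAt 0 r).hasDerivAt.const_sub (∫ x in Ioi 0, h x)

noncomputable def greenKernel (φ f : ℝ → ℝ) (W r ρ : ℝ) : ℝ :=
  if ρ < r then W⁻¹ * φ r * f ρ else W⁻¹ * f r * φ ρ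

/-- `W⁻¹ (a(r) ∫₀ʳ f g + b(r) ∫ᵣ^∞ φ g)`: for `(a, b) = (φ, f)` the integral of `g` against
`greenKernel φ f W r`, for `(a, b) = (φ', f')` its derivative in `r`. -/
noncomputable def greenCombination (φ f a b : ℝ → ℝ) (W : ℝ) (g : ℝ → ℂ) (r : ℝ) : ℂ :=
  ((W⁻¹ : ℝ) : ℂ) * ((a r : ℂ) * (∫ ρ in 0..r, (f ρ : ℂ) * g ρ) +
    (b r : ℂ) * ∫ ρ in Ioi r, (φ ρ : ℂ) * g ρ)

section VariationOfParameters

variable {φ f a b a' b' : ℝ → ℝ} {W r : ℝ} {g : ℝ → ℂ}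

lemma greenKernel_of_le {ρ : ℝ} (hρ : ρ ≤ r) : greenKernel φ f W r ρ = W⁻¹ * φ r * f ρ := by
  rcases hρ.lt_or_eq with hρ | rfl
  · exact if_pos hρ
  · rw [greenKernel, if_neg (lt_irrefl ρ)]
    ring

lemma greenKernel_of_lt {ρ : ℝ} (hρ : r < ρ) : greenKernel φ f W r ρ = W⁻¹ * f r * φ ρ :=
  if_neg hρ.not_gt

lemma integrableOn_greenKernel_mul_and_integral_eq (hr : 0 < r)
    (hf : Integrable fun ρ => (f ρ : ℂ) * g ρ) (hφ : Integrable fun ρ => (φ ρ : ℂ) * g ρ) :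
    IntegrableOn (fun ρ => (greenKernel φ f W r ρ : ℂ) * g ρ) (Ioi 0) ∧
      ∫ ρ in Ioi 0, (greenKernel φ f W r ρ : ℂ) * g ρ = greenCombination φ f φ f W g r := by
  have hleft : EqOn (fun ρ => (greenKernel φ f W r ρ : ℂ) * g ρ)
      (fun ρ => ((W⁻¹ * φ r : ℝ) : ℂ) * ((f ρ : ℂ) * g ρ)) (Ioc 0 r) := fun ρ hρ => by
    simp only [greenKernel_of_le hρ.2]
    push_cast
    ring
  have hright : EqOn (fun ρ => (greenKernel φ f W r ρ : ℂ) * g ρ)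
      (fun ρ => ((W⁻¹ * f r : ℝ) : ℂ) * ((φ ρ : ℂ) * g ρ)) (Ioi r) := fun ρ hρ => by
    simp only [greenKernel_of_lt hρ]
    push_cast
    ring
  have hint_left := ((hf.const_mul _).integrableOn.congr_fun hleft.symm measurableSet_Ioc)
  have hint_right := ((hφ.const_mul _).integrableOn.congr_fun hright.symm measurableSet_Ioi)
  rw [← Ioc_union_Ioi_eq_Ioi hr.le]
  refine ⟨hint_left.union hint_right, ?_⟩
  rw [setIntegral_union Ioc_disjoint_Ioi_same measurableSet_Ioi hint_left hint_right,
    setIntegral_congr_fun measurableSet_Ioc hleft, setIntegral_congr_fun measurableSet_Ioi hright,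
    integral_const_mul, integral_const_mul, greenCombination,
    intervalIntegral.integral_of_le hr.le]
  push_cast
  ring

lemma hasDerivAt_greenCombination (hf : Continuous fun ρ => (f ρ : ℂ) * g ρ)
    (hφ : Continuous fun ρ => (φ ρ : ℂ) * g ρ) (hφi : Integrable fun ρ => (φ ρ : ℂ) * g ρ)
    (ha : HasDerivAt a (a' r) r) (hb : HasDerivAt b (b' r) r) :
    HasDerivAt (greenCombination φ f a b W g)
      (greenCombination φ f a' b' W g r + ((W⁻¹ * (a r * f r - b r * φ r) : ℝ) : ℂ) * g r) r := by
  refine (((ha.ofReal_comp.mul (hf.integral_hasStrictDerivAt 0 r).hasDerivAt).add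
    (hb.ofReal_comp.mul (hasDerivAt_setIntegral_Ioi hφi hφ r))).const_mul
      ((W⁻¹ : ℝ) : ℂ)).congr_deriv ?_
  simp only [greenCombination]
  push_cast
  ring

lemma hasDerivAt_greenCombination_self {φ' f' : ℝ → ℝ} (hf : Continuous fun ρ => (f ρ : ℂ) * g ρ)
    (hφ : Continuous fun ρ => (φ ρ : ℂ) * g ρ) (hφi : Integrable fun ρ => (φ ρ : ℂ) * g ρ)
    (hφ' : HasDerivAt φ (φ' r) r) (hf' : HasDerivAt f (f' r) r) :
    HasDerivAt (greenCombination φ f φ f W g) (greenCombination φ f φ' f' W g r) r := by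
  refine (hasDerivAt_greenCombination hf hφ hφi hφ' hf').congr_deriv ?_
  rw [mul_comm (f r), sub_self, mul_zero, Complex.ofReal_zero, zero_mul, add_zero]

lemma hasDerivAt_greenCombination_deriv {φ' f' q : ℝ → ℝ}
    (hf : Continuous fun ρ => (f ρ : ℂ) * g ρ) (hφ : Continuous fun ρ => (φ ρ : ℂ) * g ρ)
    (hφi : Integrable fun ρ => (φ ρ : ℂ) * g ρ) (hφ'' : HasDerivAt φ' (q r * φ r) r)
    (hf'' : HasDerivAt f' (q r * f r) r) (hW : φ r * f' r - φ' r * f r = W) (hW0 : W ≠ 0) :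
    HasDerivAt (greenCombination φ f φ' f' W g)
      (q r * greenCombination φ f φ f W g r - g r) r := by
  refine (hasDerivAt_greenCombination (a' := fun x => q x * φ x) (b' := fun x => q x * f x)
    hf hφ hφi hφ'' hf'').congr_deriv ?_
  have hjump : W⁻¹ * (φ' r * f r - f' r * φ r) = -1 := by
    rw [show φ' r * f r - f' r * φ r = -W by linarith, mul_neg, inv_mul_cancel₀ hW0]
  rw [hjump]
  simp only [greenCombination]
  push_cast
  ring

theorem greenKernel_solves_inhomogeneous_ODE {φ' f' q : ℝ → ℝ}
    (hφ : ∀ x > 0, HasDerivAt φ (φ' x) x) (hφ' : ∀ x > 0, HasDerivAt φ' (q x * φ x) x)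
    (hf : ∀ x > 0, HasDerivAt f (f' x) x) (hf' : ∀ x > 0, HasDerivAt f' (q x * f x) x)
    (hW : ∀ x > 0, φ x * f' x - φ' x * f x = W) (hW0 : W ≠ 0)
    (hg : Continuous g) (hgc : HasCompactSupport g) (hgsupp : tsupport g ⊆ Ioi 0) :
    (∀ r : ℝ, 0 < r →
      IntegrableOn (fun ρ : ℝ => (greenKernel φ f W r ρ : ℂ) * g ρ) (Ioi 0)) ∧
    (∀ r : ℝ, 0 < r →
      DifferentiableAt ℝ (fun r' : ℝ => ∫ ρ in Ioi 0, (greenKernel φ f W r' ρ : ℂ) * g ρ) r ∧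
      DifferentiableAt ℝ
        (deriv fun r' : ℝ => ∫ ρ in Ioi 0, (greenKernel φ f W r' ρ : ℂ) * g ρ) r ∧
      -(deriv (deriv fun r' : ℝ => ∫ ρ in Ioi 0, (greenKernel φ f W r' ρ : ℂ) * g ρ) r) +
          (q r : ℂ) * ∫ ρ in Ioi 0, (greenKernel φ f W r ρ : ℂ) * g ρ = g r) := by
  have hcont {h h' : ℝ → ℝ} (hh : ∀ x > 0, HasDerivAt h (h' x) x) :
      Continuous fun ρ => (h ρ : ℂ) * g ρ :=
    continuous_ofReal_mul_of_tsupport_subset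
      (fun x hx => (hh x hx).continuousAt.continuousWithinAt) isOpen_Ioi hg hgsupp
  have hφi := (hcont hφ).integrable_of_hasCompactSupport (μ := volume) hgc.mul_left
  have hfi := (hcont hf).integrable_of_hasCompactSupport (μ := volume) hgc.mul_left
  refine ⟨fun r hr => (integrableOn_greenKernel_mul_and_integral_eq hr hfi hφi).1, fun r hr => ?_⟩
  set u := fun r' : ℝ => ∫ ρ in Ioi 0, (greenKernel φ f W r' ρ : ℂ) * g ρ
  have hu (x : ℝ) (hx : 0 < x) : u =ᶠ[𝓝 x] greenCombination φ f φ f W g := by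
    filter_upwards [Ioi_mem_nhds hx] with y hy
    exact (integrableOn_greenKernel_mul_and_integral_eq hy hfi hφi).2
  have hu' (x : ℝ) (hx : 0 < x) : HasDerivAt u (greenCombination φ f φ' f' W g x) x :=
    (hasDerivAt_greenCombination_self (hcont hf) (hcont hφ) hφi (hφ x hx)
      (hf x hx)).congr_of_eventuallyEq (hu x hx)
  have hderiv : deriv u =ᶠ[𝓝 r] greenCombination φ f φ' f' W g := by
    filter_upwards [Ioi_mem_nhds hr] with x hx
    exact (hu' x hx).deriv
  have hu'' : HasDerivAt (deriv u) (q r * greenCombination φ f φ f W g r - g r) r :=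
    (hasDerivAt_greenCombination_deriv (hcont hf) (hcont hφ) hφi (hφ' r hr) (hf' r hr) (hW r hr)
      hW0).congr_of_eventuallyEq hderiv
  refine ⟨(hu' r hr).differentiableAt, hu''.differentiableAt, ?_⟩
  rw [hu''.deriv, (integrableOn_greenKernel_mul_and_integral_eq hr hfi hφi).2]
  ring

end VariationOfParameters

noncomputable def PhiGDeriv (α : ℝ) (k : ℤ) (x : ℝ) : ℝ :=
  √(Real.pi * (1 + α) / (2 * |(k : ℝ)|)) *
    liouvilleProfileDeriv α |(k : ℝ)| (fun y => Real.exp (-y)) (fun y => -Real.exp (-y)) x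

noncomputable def FGDeriv (α : ℝ) (k : ℤ) (x : ℝ) : ℝ :=
  √(2 * (1 + α) / (Real.pi * |(k : ℝ)|)) *
    liouvilleProfileDeriv α |(k : ℝ)| Real.sinh Real.cosh x

section GreenFunctions

variable {α x : ℝ} {k : ℤ}

lemma greenG_eq_greenKernel (α : ℝ) (k : ℤ) :
    GreenG α k = greenKernel (PhiG α k) (FG α k) (1 + α) :=
  rfl

lemma phiG_eq_const_mul_liouvilleProfile (α : ℝ) (k : ℤ) :
    PhiG α k = fun x => √(Real.pi * (1 + α) / (2 * |(k : ℝ)|)) *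
      liouvilleProfile α |(k : ℝ)| (fun y => Real.exp (-y)) x := by
  funext x
  simp only [PhiG, liouvilleProfile, mul_assoc]

lemma fG_eq_const_mul_liouvilleProfile (α : ℝ) (k : ℤ) :
    FG α k = fun x => √(2 * (1 + α) / (Real.pi * |(k : ℝ)|)) *
      liouvilleProfile α |(k : ℝ)| Real.sinh x := by
  funext x
  simp only [FG, liouvilleProfile, mul_assoc]

lemma hasDerivAt_exp_neg (y : ℝ) : HasDerivAt (fun y => Real.exp (-y)) (-Real.exp (-y)) y := by
  simpa using (hasDerivAt_neg y).exp

lemma hasDerivAt_neg_exp_neg (y : ℝ) :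
    HasDerivAt (fun y => -Real.exp (-y)) (Real.exp (-y)) y := by
  simpa using (hasDerivAt_neg y).exp.fun_neg

lemma hasDerivAt_phiG (hα : 1 + α ≠ 0) (hx : 0 < x) :
    HasDerivAt (PhiG α k) (PhiGDeriv α k x) x := by
  rw [phiG_eq_const_mul_liouvilleProfile]
  exact (hasDerivAt_liouvilleProfile hα hasDerivAt_exp_neg hx).const_mul _

lemma hasDerivAt_fG (hα : 1 + α ≠ 0) (hx : 0 < x) :
    HasDerivAt (FG α k) (FGDeriv α k x) x := by
  rw [fG_eq_const_mul_liouvilleProfile]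
  exact (hasDerivAt_liouvilleProfile hα Real.hasDerivAt_sinh hx).const_mul _

lemma hasDerivAt_phiGDeriv (hα : 1 + α ≠ 0) (hx : 0 < x) :
    HasDerivAt (PhiGDeriv α k) (liouvillePotential α |(k : ℝ)| x * PhiG α k x) x := by
  refine ((hasDerivAt_liouvilleProfileDeriv hα hasDerivAt_exp_neg hasDerivAt_neg_exp_neg
    hx).const_mul _).congr_deriv ?_
  rw [phiG_eq_const_mul_liouvilleProfile]
  ring

lemma hasDerivAt_fGDeriv (hα : 1 + α ≠ 0) (hx : 0 < x) :
    HasDerivAt (FGDeriv α k) (liouvillePotential α |(k : ℝ)| x * FG α k x) x := by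
  refine ((hasDerivAt_liouvilleProfileDeriv hα Real.hasDerivAt_sinh Real.hasDerivAt_cosh
    hx).const_mul _).congr_deriv ?_
  rw [fG_eq_const_mul_liouvilleProfile]
  ring

lemma sqrt_mul_sqrt_mul_abs_eq_one_add (hα : 0 < 1 + α) (hk : k ≠ 0) :
    √(Real.pi * (1 + α) / (2 * |(k : ℝ)|)) * √(2 * (1 + α) / (Real.pi * |(k : ℝ)|)) * |(k : ℝ)|
      = 1 + α := by
  have hk' : 0 < |(k : ℝ)| := abs_pos.mpr (Int.cast_ne_zero.mpr hk)
  rw [← Real.sqrt_mul (by positivity),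
    show Real.pi * (1 + α) / (2 * |(k : ℝ)|) * (2 * (1 + α) / (Real.pi * |(k : ℝ)|))
      = ((1 + α) / |(k : ℝ)|) ^ 2 by field_simp,
    Real.sqrt_sq (by positivity)]
  field_simp

lemma phiG_fG_wronskian (hα : 0 < 1 + α) (hk : k ≠ 0) (hx : 0 < x) :
    PhiG α k x * FGDeriv α k x - PhiGDeriv α k x * FG α k x = 1 + α := by
  have hw := liouvilleProfile_wronskian (α := α) (κ := |(k : ℝ)|) (E := fun y => Real.exp (-y))
    (E' := fun y => -Real.exp (-y)) (G := Real.sinh) (G' := Real.cosh) hx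
  have hexp (y : ℝ) : Real.exp (-y) * Real.cosh y - -Real.exp (-y) * Real.sinh y = 1 := by
    rw [neg_mul, sub_neg_eq_add, ← mul_add, Real.cosh_add_sinh, ← Real.exp_add, neg_add_cancel,
      Real.exp_zero]
  rw [phiG_eq_const_mul_liouvilleProfile, fG_eq_const_mul_liouvilleProfile]
  simp only [PhiGDeriv, FGDeriv] at hw ⊢
  linear_combination
    √(Real.pi * (1 + α) / (2 * |(k : ℝ)|)) * √(2 * (1 + α) / (Real.pi * |(k : ℝ)|)) *
      (hw + |(k : ℝ)| * hexp (|(k : ℝ)| * x ^ (1 + α) / (1 + α))) +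
    sqrt_mul_sqrt_mul_abs_eq_one_add hα hk

end GreenFunctions

theorem green_kernel_solves_inhomogeneous_ODE_general (α : ℝ) (hα0 : 0 < α)
    (k : ℤ) (hk : k ≠ 0) (g : ℝ → ℂ) (hg : Continuous g) (hgc : HasCompactSupport g)
    (hgsupp : tsupport g ⊆ Set.Ioi 0) :
    (∀ r : ℝ, 0 < r →
      IntegrableOn (fun ρ : ℝ => (GreenG α k r ρ : ℂ) * g ρ) (Set.Ioi 0)) ∧
    (∀ r : ℝ, 0 < r →
      DifferentiableAt ℝ
        (fun r' : ℝ => ∫ ρ in Set.Ioi (0 : ℝ), (GreenG α k r' ρ : ℂ) * g ρ) r ∧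
      DifferentiableAt ℝ
        (deriv fun r' : ℝ => ∫ ρ in Set.Ioi (0 : ℝ), (GreenG α k r' ρ : ℂ) * g ρ) r ∧
      -(deriv (deriv fun r' : ℝ => ∫ ρ in Set.Ioi (0 : ℝ), (GreenG α k r' ρ : ℂ) * g ρ) r) +
          (((k : ℝ) ^ 2 * r ^ (2 * α) + α * (2 + α) / (4 * r ^ 2) : ℝ) : ℂ) *
            ∫ ρ in Set.Ioi (0 : ℝ), (GreenG α k r ρ : ℂ) * g ρ = g r) := by
  have hα : 0 < 1 + α := by linarith
  have hq : liouvillePotential α |(k : ℝ)| =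
      fun x => (k : ℝ) ^ 2 * x ^ (2 * α) + α * (2 + α) / (4 * x ^ 2) := by
    funext x
    rw [liouvillePotential, sq_abs]
  have h := greenKernel_solves_inhomogeneous_ODE (fun x hx => hasDerivAt_phiG (k := k) hα.ne' hx)
    (fun x hx => hasDerivAt_phiGDeriv hα.ne' hx) (fun x hx => hasDerivAt_fG hα.ne' hx)
    (fun x hx => hasDerivAt_fGDeriv hα.ne' hx) (fun x hx => phiG_fG_wronskian hα hk hx)
    hα.ne' hg hgc hgsupp
  rw [hq] at h
  rwa [greenG_eq_greenKernel]

/-- For `α ∈ (0,1)`, nonzero `k`, and continuous `g : ℝ → ℂ` with compact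
support contained in `(0,∞)`, the function `u(r) = ∫₀^∞ G_{α,k}(r,ρ) g(ρ) dρ` is well defined
and twice differentiable on `(0,∞)`, and satisfies
`−u''(r) + (k²r^{2α} + α(2+α)/(4r²)) u(r) = g(r)` for every `r > 0`. -/
theorem green_kernel_solves_inhomogeneous_ODE (α : ℝ) (hα0 : 0 < α) (hα1 : α < 1)
    (k : ℤ) (hk : k ≠ 0) (g : ℝ → ℂ) (hg : Continuous g) (hgc : HasCompactSupport g)
    (hgsupp : tsupport g ⊆ Set.Ioi 0) :
    (∀ r : ℝ, 0 < r →
      IntegrableOn (fun ρ : ℝ => (GreenG α k r ρ : ℂ) * g ρ) (Set.Ioi 0)) ∧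
    (∀ r : ℝ, 0 < r →
      DifferentiableAt ℝ
        (fun r' : ℝ => ∫ ρ in Set.Ioi (0 : ℝ), (GreenG α k r' ρ : ℂ) * g ρ) r ∧
      DifferentiableAt ℝ
        (deriv fun r' : ℝ => ∫ ρ in Set.Ioi (0 : ℝ), (GreenG α k r' ρ : ℂ) * g ρ) r ∧
      -(deriv (deriv fun r' : ℝ => ∫ ρ in Set.Ioi (0 : ℝ), (GreenG α k r' ρ : ℂ) * g ρ) r) +
          (((k : ℝ) ^ 2 * r ^ (2 * α) + α * (2 + α) / (4 * r ^ 2) : ℝ) : ℂ) *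
            ∫ ρ in Set.Ioi (0 : ℝ), (GreenG α k r ρ : ℂ) * g ρ = g r) :=
  green_kernel_solves_inhomogeneous_ODE_general α hα0 k hk g hg hgc hgsupp
end

section
/- Let α ∈ (0,1), let k be a nonzero integer, and let h : (0,∞) → ℂ be measurable and square integrable. Define b₀(x) = (1+α)^{−1} ∫₀ˣ F_{α,k}(ρ)·h(ρ) dρ and b∞(x) = −(1+α)^{−1} ∫₀ˣ Φ_{α,k}(ρ)·h(ρ) dρ for x > 0. Then b₀(x) → 0 and b∞(x) → 0 as x → 0⁺, and moreover b∞(x)·F_{α,k}(x) + b₀(x)·Φ_{α,k}(x) = o(x^{3/2}) as x → 0⁺. -/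
open MeasureTheory Filter Topology Asymptotics

/-! By Cauchy–Schwarz, if `‖g ρ‖ ≤ M ρ^s` on `(0, x)` with `2s > -1`, then
`‖∫₀ˣ g h‖ ≤ M (2s+1)^{-1/2} x^{s+1/2} ‖h‖_{L²(0,x)}`, and `‖h‖_{L²(0,x)} → 0` as `x → 0⁺`;
hence `∫₀ˣ g h = o(x^{s+1/2})` whenever `g = O(ρ^s)` at `0⁺`. Since `Φ_{α,k} = O(x^{-α/2})` and,
because `sinh t ~ t`, `F_{α,k} = O(x^{1+α/2})`, this gives `b∞ = o(x^{(1-α)/2})` and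
`b₀ = o(x^{(3+α)/2})`. Both exponents are positive, and in each cross term the exponents add
up to `3/2`. -/

open Set

theorem norm_integral_mul_le_sqrt_mul_sqrt {X 𝕜 : Type*} [MeasurableSpace X] [RCLike 𝕜]
    {μ : Measure X} {f g : X → 𝕜} (hf : MemLp f 2 μ) (hg : MemLp g 2 μ) :
    ‖∫ x, f x * g x ∂μ‖ ≤ √(∫ x, ‖f x‖ ^ 2 ∂μ) * √(∫ x, ‖g x‖ ^ 2 ∂μ) := by
  calc ‖∫ x, f x * g x ∂μ‖ ≤ ∫ x, ‖f x‖ * ‖g x‖ ∂μ := by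
        simpa only [norm_mul] using norm_integral_le_integral_norm (fun x => f x * g x)
    _ ≤ (∫ x, ‖f x‖ ^ (2 : ℝ) ∂μ) ^ (1 / (2 : ℝ)) * (∫ x, ‖g x‖ ^ (2 : ℝ) ∂μ) ^ (1 / (2 : ℝ)) :=
        integral_mul_norm_le_Lp_mul_Lq (f := f) (g := g) .two_two (by simpa using hf)
          (by simpa using hg)
    _ = √(∫ x, ‖f x‖ ^ 2 ∂μ) * √(∫ x, ‖g x‖ ^ 2 ∂μ) := by
        simp only [Real.rpow_two, Real.sqrt_eq_rpow]

theorem tendsto_setIntegral_Ioo_nhdsGT_zero {E : Type*} [NormedAddCommGroup E] [NormedSpace ℝ E]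
    {f : ℝ → E} (hf : IntegrableOn f (Ioi 0)) :
    Tendsto (fun x => ∫ ρ in Ioo 0 x, f ρ) (𝓝[>] 0) (𝓝 0) := by
  have hvol : Tendsto (fun x => volume.restrict (Ioi 0) (Ioo 0 x)) (𝓝[>] (0 : ℝ)) (𝓝 0) := by
    simp only [Measure.restrict_apply measurableSet_Ioo, Ioo_inter_Ioi, max_self,
      Real.volume_Ioo, sub_zero]
    simpa using (ENNReal.tendsto_ofReal (tendsto_id (x := 𝓝 (0 : ℝ)))).mono_left nhdsWithin_le_nhds
  simpa [Measure.restrict_restrict measurableSet_Ioo, inter_eq_left.2 Ioo_subset_Ioi_self]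
    using hf.tendsto_setIntegral_nhds_zero hvol

theorem tendsto_rpow_nhdsGT_zero {p : ℝ} (hp : 0 < p) :
    Tendsto (fun x : ℝ => x ^ p) (𝓝[>] 0) (𝓝 0) := by
  simpa [Real.zero_rpow hp.ne'] using
    (Real.continuousAt_rpow_const 0 p (Or.inr hp.le)).tendsto.mono_left nhdsWithin_le_nhds

theorem rpow_mul_rpow_eventuallyEq_nhdsGT_zero {a b c : ℝ} (h : a + b = c) :
    (fun x : ℝ => x ^ a * x ^ b) =ᶠ[𝓝[>] 0] fun x => x ^ c := by
  filter_upwards [self_mem_nhdsWithin] with x hx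
  rw [← Real.rpow_add hx, h]

section PowerWeight

variable {𝕜 : Type*} [RCLike 𝕜] {f : ℝ → 𝕜} {M s x : ℝ}

theorem integrableOn_Ioo_zero_rpow {r : ℝ} (hr : -1 < r) :
    IntegrableOn (fun ρ : ℝ => ρ ^ r) (Ioo 0 x) :=
  (intervalIntegral.intervalIntegrable_rpow' hr).1.mono_set Ioo_subset_Ioc_self

theorem norm_sq_le_of_norm_le_rpow {y : 𝕜} {ρ : ℝ} (hρ : 0 ≤ ρ) (hy : ‖y‖ ≤ M * ρ ^ s) :
    ‖y‖ ^ 2 ≤ M ^ 2 * ρ ^ (2 * s) := by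
  calc ‖y‖ ^ 2 ≤ (M * ρ ^ s) ^ 2 := pow_le_pow_left₀ (norm_nonneg y) hy 2
    _ = M ^ 2 * ρ ^ (2 * s) := by rw [mul_pow, ← Real.rpow_mul_natCast hρ]; ring_nf

theorem integral_Ioo_norm_sq_le_of_norm_le_rpow (hs : -1 < 2 * s) (hx : 0 ≤ x)
    (hf : ∀ ρ ∈ Ioo 0 x, ‖f ρ‖ ≤ M * ρ ^ s) :
    ∫ ρ in Ioo 0 x, ‖f ρ‖ ^ 2 ≤ M ^ 2 / (2 * s + 1) * x ^ (2 * s + 1) := by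
  calc ∫ ρ in Ioo 0 x, ‖f ρ‖ ^ 2 ≤ ∫ ρ in Ioo 0 x, M ^ 2 * ρ ^ (2 * s) :=
        integral_mono_of_nonneg (ae_of_all _ fun _ => by positivity)
          ((integrableOn_Ioo_zero_rpow hs).const_mul _)
          (ae_restrict_of_forall_mem measurableSet_Ioo fun ρ hρ =>
            norm_sq_le_of_norm_le_rpow hρ.1.le (hf ρ hρ))
    _ = M ^ 2 / (2 * s + 1) * x ^ (2 * s + 1) := by
        rw [integral_const_mul, ← integral_Ioc_eq_integral_Ioo,
          ← intervalIntegral.integral_of_le hx, integral_rpow (Or.inl hs),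
          Real.zero_rpow (by linarith)]
        ring

theorem memLp_two_restrict_Ioo_of_norm_le_rpow
    (hfm : AEStronglyMeasurable f (volume.restrict (Ioo 0 x))) (hs : -1 < 2 * s)
    (hf : ∀ ρ ∈ Ioo 0 x, ‖f ρ‖ ≤ M * ρ ^ s) :
    MemLp f 2 (volume.restrict (Ioo 0 x)) :=
  (memLp_two_iff_integrable_sq_norm hfm).2 <|
    ((integrableOn_Ioo_zero_rpow hs).const_mul (M ^ 2)).mono' (hfm.norm.pow 2)
      (ae_restrict_of_forall_mem measurableSet_Ioo fun ρ hρ => by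
        simpa only [norm_pow, norm_norm] using norm_sq_le_of_norm_le_rpow hρ.1.le (hf ρ hρ))

theorem norm_integral_Ioo_mul_le_of_norm_le_rpow {g : ℝ → 𝕜}
    (hfm : AEStronglyMeasurable f (volume.restrict (Ioo 0 x)))
    (hg : MemLp g 2 (volume.restrict (Ioo 0 x))) (hs : -1 < 2 * s) (hx : 0 ≤ x) (hM : 0 ≤ M)
    (hf : ∀ ρ ∈ Ioo 0 x, ‖f ρ‖ ≤ M * ρ ^ s) :
    ‖∫ ρ in Ioo 0 x, f ρ * g ρ‖ ≤
      M / √(2 * s + 1) * √(∫ ρ in Ioo 0 x, ‖g ρ‖ ^ 2) * x ^ (s + 1 / 2) := by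
  calc ‖∫ ρ in Ioo 0 x, f ρ * g ρ‖
      ≤ √(∫ ρ in Ioo 0 x, ‖f ρ‖ ^ 2) * √(∫ ρ in Ioo 0 x, ‖g ρ‖ ^ 2) :=
        norm_integral_mul_le_sqrt_mul_sqrt (memLp_two_restrict_Ioo_of_norm_le_rpow hfm hs hf) hg
    _ ≤ √(M ^ 2 / (2 * s + 1) * x ^ (2 * s + 1)) * √(∫ ρ in Ioo 0 x, ‖g ρ‖ ^ 2) := by
        gcongr
        exact integral_Ioo_norm_sq_le_of_norm_le_rpow hs hx hf
    _ = M / √(2 * s + 1) * √(∫ ρ in Ioo 0 x, ‖g ρ‖ ^ 2) * x ^ (s + 1 / 2) := by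
        rw [Real.sqrt_mul' _ (by positivity), Real.sqrt_div' _ (by linarith), Real.sqrt_sq hM,
          Real.sqrt_eq_rpow (x ^ _), ← Real.rpow_mul hx]
        ring_nf

theorem isLittleO_integral_Ioo_mul {g : ℝ → 𝕜}
    (hfm : AEStronglyMeasurable f (volume.restrict (Ioi 0)))
    (hg : MemLp g 2 (volume.restrict (Ioi 0))) (hs : -1 < 2 * s)
    (hf : f =O[𝓝[>] 0] fun ρ => ρ ^ s) :
    (fun x => ∫ ρ in Ioo 0 x, f ρ * g ρ) =o[𝓝[>] 0] fun x => x ^ (s + 1 / 2) := by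
  obtain ⟨M, hM, hMf⟩ := hf.exists_nonneg
  obtain ⟨u, hu, hfu⟩ := mem_nhdsGT_iff_exists_Ioo_subset.1 hMf.bound
  have hε : Tendsto (fun x => √(∫ ρ in Ioo 0 x, ‖g ρ‖ ^ 2)) (𝓝[>] 0) (𝓝 0) := by
    simpa using (tendsto_setIntegral_Ioo_nhdsGT_zero
      ((memLp_two_iff_integrable_sq_norm hg.1).1 hg)).sqrt
  refine IsBigO.trans_isLittleO (g := fun x =>
      M / √(2 * s + 1) * √(∫ ρ in Ioo 0 x, ‖g ρ‖ ^ 2) * x ^ (s + 1 / 2)) (.of_bound' ?_) ?_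
  · filter_upwards [Ioo_mem_nhdsGT hu] with x hx
    have hIoo : volume.restrict (Ioo (0 : ℝ) x) ≤ volume.restrict (Ioi 0) :=
      Measure.restrict_mono Ioo_subset_Ioi_self le_rfl
    rw [Real.norm_of_nonneg (mul_nonneg (by positivity) (Real.rpow_nonneg hx.1.le _))]
    refine norm_integral_Ioo_mul_le_of_norm_le_rpow (hfm.mono_measure hIoo)
      (hg.mono_measure hIoo) hs hx.1.le hM fun ρ hρ => ?_
    simpa only [mem_ofPred_eq, Real.norm_of_nonneg (Real.rpow_nonneg hρ.1.le s)] using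
      hfu ⟨hρ.1, hρ.2.trans hx.2⟩
  · have hεM : Tendsto (fun x => M / √(2 * s + 1) * √(∫ ρ in Ioo 0 x, ‖g ρ‖ ^ 2)) (𝓝[>] 0)
        (𝓝 0) := by simpa using hε.const_mul (M / √(2 * s + 1))
    simpa using ((isLittleO_one_iff ℝ).2 hεM).mul_isBigO
      (isBigO_refl (fun x : ℝ => x ^ (s + 1 / 2)) _)

end PowerWeight

section Asymptotics

variable {α : ℝ} (k : ℤ)

theorem PhiG_isBigO_rpow (hα : -1 < α) :
    PhiG α k =O[𝓝[>] 0] fun x => x ^ (-(α / 2)) := by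
  have hexp : Tendsto (fun x : ℝ => Real.exp (-(|(k : ℝ)| * x ^ (1 + α) / (1 + α))))
      (𝓝[>] 0) (𝓝 1) := by
    simpa using (((tendsto_rpow_nhdsGT_zero (by linarith : 0 < 1 + α)).const_mul
      |(k : ℝ)|).div_const (1 + α)).neg.rexp
  unfold PhiG
  simpa only [mul_one] using
    ((isBigO_refl (fun x : ℝ => x ^ (-(α / 2))) _).const_mul_left _).mul (hexp.isBigO_one ℝ)

theorem FG_isBigO_rpow (hα : -1 < α) :
    FG α k =O[𝓝[>] 0] fun x => x ^ (1 + α / 2) := by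
  set t : ℝ → ℝ := fun x => |(k : ℝ)| * x ^ (1 + α) / (1 + α)
  have ht : Tendsto t (𝓝[>] 0) (𝓝 0) := by
    simpa using ((tendsto_rpow_nhdsGT_zero (by linarith : 0 < 1 + α)).const_mul
      |(k : ℝ)|).div_const (1 + α)
  have hsinh : Real.sinh =O[𝓝 0] fun x => x := by
    simpa using (Real.hasDerivAt_sinh 0).isBigO_sub
  have htO : t =O[𝓝[>] 0] fun x => x ^ (1 + α) :=
    ((isBigO_refl (fun x : ℝ => x ^ (1 + α)) _).const_mul_left (|(k : ℝ)| / (1 + α))).congr_left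
      fun x => by simp only [t]; ring
  exact (((isBigO_refl (fun x : ℝ => x ^ (-(α / 2))) _).const_mul_left _).mul
    ((hsinh.comp_tendsto ht).trans htO)).trans_eventuallyEq
    (rpow_mul_rpow_eventuallyEq_nhdsGT_zero (by ring))

end Asymptotics

theorem boundary_coefficients_vanish_general (α : ℝ) (hα0 : 0 < α) (hα1 : α < 1)
    (k : ℤ) (h : ℝ → ℂ) (hm : Measurable h)
    (hL2 : IntegrableOn (fun x : ℝ => ‖h x‖ ^ 2) (Set.Ioi 0)) :
    Tendsto (fun x : ℝ =>
        ((1 + α)⁻¹ : ℂ) * ∫ ρ in Set.Ioo (0 : ℝ) x, (FG α k ρ : ℂ) * h ρ)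
      (𝓝[>] 0) (𝓝 0) ∧
    Tendsto (fun x : ℝ =>
        -((1 + α)⁻¹ : ℂ) * ∫ ρ in Set.Ioo (0 : ℝ) x, (PhiG α k ρ : ℂ) * h ρ)
      (𝓝[>] 0) (𝓝 0) ∧
    (fun x : ℝ =>
        (-((1 + α)⁻¹ : ℂ) * ∫ ρ in Set.Ioo (0 : ℝ) x, (PhiG α k ρ : ℂ) * h ρ) *
            (FG α k x : ℂ) +
          (((1 + α)⁻¹ : ℂ) * ∫ ρ in Set.Ioo (0 : ℝ) x, (FG α k ρ : ℂ) * h ρ) *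
            (PhiG α k x : ℂ))
      =o[𝓝[>] 0] fun x : ℝ => x ^ ((3 : ℝ) / 2) := by
  have hα : -1 < α := by linarith
  have hΦ := Complex.isBigO_ofReal_left.2 (PhiG_isBigO_rpow k hα)
  have hF := Complex.isBigO_ofReal_left.2 (FG_isBigO_rpow k hα)
  have hh : MemLp h 2 (volume.restrict (Ioi 0)) :=
    (memLp_two_iff_integrable_sq_norm hm.aestronglyMeasurable).2 hL2
  have hIΦ := isLittleO_integral_Ioo_mul (by unfold PhiG; fun_prop) hh (by linarith) hΦ
  have hIF := isLittleO_integral_Ioo_mul (by unfold FG; fun_prop) hh (by linarith) hF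
  refine ⟨(hIF.const_mul_left _).trans_tendsto (tendsto_rpow_nhdsGT_zero (by linarith)),
    (hIΦ.const_mul_left _).trans_tendsto (tendsto_rpow_nhdsGT_zero (by linarith)), ?_⟩
  exact (((hIΦ.const_mul_left _).mul_isBigO hF).trans_eventuallyEq
      (rpow_mul_rpow_eventuallyEq_nhdsGT_zero (by ring))).add
    (((hIF.const_mul_left _).mul_isBigO hΦ).trans_eventuallyEq
      (rpow_mul_rpow_eventuallyEq_nhdsGT_zero (by ring)))

/-- Let `α ∈ (0,1)`, `k ≠ 0`, and let `h : (0,∞) → ℂ` be measurable and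
square integrable.  With `b₀(x) = (1+α)⁻¹ ∫₀ˣ F_{α,k} h` and `b∞(x) = −(1+α)⁻¹ ∫₀ˣ Φ_{α,k} h`
one has `b₀(x) → 0`, `b∞(x) → 0` as `x → 0⁺`, and
`b∞(x) F_{α,k}(x) + b₀(x) Φ_{α,k}(x) = o(x^{3/2})` as `x → 0⁺`. -/
theorem boundary_coefficients_vanish (α : ℝ) (hα0 : 0 < α) (hα1 : α < 1)
    (k : ℤ) (hk : k ≠ 0) (h : ℝ → ℂ) (hm : Measurable h)
    (hL2 : IntegrableOn (fun x : ℝ => ‖h x‖ ^ 2) (Set.Ioi 0)) :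
    Tendsto (fun x : ℝ =>
        ((1 + α)⁻¹ : ℂ) * ∫ ρ in Set.Ioo (0 : ℝ) x, (FG α k ρ : ℂ) * h ρ)
      (𝓝[>] 0) (𝓝 0) ∧
    Tendsto (fun x : ℝ =>
        -((1 + α)⁻¹ : ℂ) * ∫ ρ in Set.Ioo (0 : ℝ) x, (PhiG α k ρ : ℂ) * h ρ)
      (𝓝[>] 0) (𝓝 0) ∧
    (fun x : ℝ =>
        (-((1 + α)⁻¹ : ℂ) * ∫ ρ in Set.Ioo (0 : ℝ) x, (PhiG α k ρ : ℂ) * h ρ) *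
            (FG α k x : ℂ) +
          (((1 + α)⁻¹ : ℂ) * ∫ ρ in Set.Ioo (0 : ℝ) x, (FG α k ρ : ℂ) * h ρ) *
            (PhiG α k x : ℂ))
      =o[𝓝[>] 0] fun x : ℝ => x ^ ((3 : ℝ) / 2) :=
  boundary_coefficients_vanish_general α hα0 hα1 k h hm hL2
end

section
/- Let α ∈ [0,1) and let r : (0,1) → ℂ be twice continuously differentiable with ∫₀¹ x^{−(3+α)}·|r(x)|² dx < ∞ and ∫₀¹ |r''(x)|² dx < ∞. Then r(x) = o(x^{3/2}) and r'(x) = o(x^{1/2}) as x → 0⁺. -/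
/-!
Write `g = r''`, which lies in `L²(0,1)`. Taylor's formula with integral remainder gives
`r' x = c + G x` and `r x = d + x c + H x`, where `G` and `H` are the first and second primitives
of `g` from `0`. By Cauchy–Schwarz, `‖G x‖ ≤ ‖g‖_{L²(0,x)} x^{1/2}`, hence
`‖H x‖ ≤ ‖g‖_{L²(0,x)} x^{3/2}`, and `‖g‖_{L²(0,x)} → 0`; so `G = o(x^{1/2})` and
`H = o(x^{3/2})`.
It remains to see `d = c = 0`: if `d ≠ 0` then `x^{-(3+α)} ‖r x‖²` is bounded below by a
multiple of `x^{-3-α}` near `0`, and if `d = 0` but `c ≠ 0` by a multiple of `x^{-1-α}`; neither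
is integrable at `0` when `α ≥ 0`.
-/

open MeasureTheory Filter Topology Asymptotics Set
open scoped Interval

theorem isLittleO_of_norm_le_mul {α E F : Type*} [NormedAddCommGroup E] [NormedAddCommGroup F]
    {f : α → E} {g : α → F} {φ : α → ℝ} {l : Filter α} (hφ : Tendsto φ l (𝓝 0))
    (h : ∀ᶠ x in l, ‖f x‖ ≤ φ x * ‖g x‖) : f =o[l] g := by
  refine isLittleO_iff.2 fun ε hε => ?_
  filter_upwards [h, hφ.eventually_le_const hε] with x hx hφx
  exact hx.trans (mul_le_mul_of_nonneg_right hφx (norm_nonneg _))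

theorem isLittleO_rpow_rpow_nhdsGT_zero {p q : ℝ} (hpq : p < q) :
    (fun x : ℝ => x ^ q) =o[𝓝[>] 0] fun x => x ^ p := by
  have hφ : Tendsto (fun x : ℝ => x ^ (q - p)) (𝓝[>] 0) (𝓝 0) := by
    simpa [Real.zero_rpow (sub_pos.2 hpq).ne'] using
      ((Real.continuousAt_rpow_const 0 (q - p) (Or.inr (sub_pos.2 hpq).le)).tendsto).mono_left
        nhdsWithin_le_nhds
  refine isLittleO_of_norm_le_mul hφ ?_
  filter_upwards [self_mem_nhdsWithin] with x (hx : 0 < x)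
  rw [Real.norm_of_nonneg (by positivity), Real.norm_of_nonneg (by positivity),
    ← Real.rpow_add hx, sub_add_cancel]

theorem tendsto_sqrt_integral_sq_norm_nhdsGT_zero {E : Type*} [NormedAddCommGroup E] {g : ℝ → E}
    {b : ℝ} (hb : 0 < b) (hg : MemLp g 2 (volume.restrict (Ioo 0 b))) :
    Tendsto (fun x => √(∫ t in 0..x, ‖g t‖ ^ 2)) (𝓝[>] 0) (𝓝 0) := by
  have hint : IntegrableOn (fun t => ‖g t‖ ^ 2) (uIcc 0 b) := by
    rw [uIcc_of_le hb.le, integrableOn_Icc_iff_integrableOn_Ioo]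
    exact hg.integrable_norm_pow two_ne_zero
  have hcont := intervalIntegral.continuousOn_primitive_interval hint 0 left_mem_uIcc
  rw [uIcc_of_le hb.le] at hcont
  have hlim : Tendsto (fun x => ∫ t in 0..x, ‖g t‖ ^ 2) (𝓝[>] 0) (𝓝 0) := by
    simpa [← nhdsWithin_Ioc_eq_nhdsGT hb] using
      hcont.tendsto.mono_left (nhdsWithin_mono 0 Ioc_subset_Icc_self)
  simpa using hlim.sqrt

variable {E : Type*} [NormedAddCommGroup E] [NormedSpace ℝ E]

theorem exists_eq_add_integral_deriv [CompleteSpace E] {f : ℝ → E} {a b : ℝ}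
    (hf : ∀ x ∈ Ioo a b, DifferentiableAt ℝ f x) (hf' : IntegrableOn (deriv f) (Ioo a b)) :
    ∃ c, ∀ x ∈ Ioo a b, f x = c + ∫ t in a..x, deriv f t := by
  rcases (Ioo a b).eq_empty_or_nonempty with h | ⟨x₀, hx₀⟩
  · exact ⟨0, by simp [h]⟩
  refine ⟨f x₀ - ∫ t in a..x₀, deriv f t, fun x hx => ?_⟩
  have hsub : uIcc x₀ x ⊆ Ioo a b := ordConnected_Ioo.uIcc_subset hx₀ hx
  have hint₀ : IntervalIntegrable (deriv f) volume a x₀ :=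
    (intervalIntegrable_iff_integrableOn_Ioc_of_le hx₀.1.le).2
      (hf'.mono_set (Ioc_subset_Ioo_right hx₀.2))
  have hint : IntervalIntegrable (deriv f) volume x₀ x := (hf'.mono_set hsub).intervalIntegrable
  have hftc : ∫ t in x₀..x, deriv f t = f x - f x₀ :=
    intervalIntegral.integral_eq_sub_of_hasDerivAt (fun t ht => (hf t (hsub ht)).hasDerivAt) hint
  rw [← intervalIntegral.integral_add_adjacent_intervals hint₀ hint, hftc]
  abel

theorem exists_eq_add_smul_add_iterated_integral [CompleteSpace E] {f : ℝ → E} {a b : ℝ}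
    (hf : ∀ x ∈ Ioo a b, DifferentiableAt ℝ f x)
    (hf' : ∀ x ∈ Ioo a b, DifferentiableAt ℝ (deriv f) x)
    (hf'' : IntegrableOn (deriv (deriv f)) (Ioo a b)) :
    ∃ c d : E, ∀ x ∈ Ioo a b, deriv f x = c + ∫ t in a..x, deriv (deriv f) t ∧
      f x = d + (x - a) • c + ∫ t in a..x, ∫ s in a..t, deriv (deriv f) s := by
  rcases (Ioo a b).eq_empty_or_nonempty with h | hne
  · exact ⟨0, 0, by simp [h]⟩
  have hab : a ≤ b := (nonempty_Ioo.1 hne).le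
  obtain ⟨c, hc⟩ := exists_eq_add_integral_deriv hf' hf''
  set G := fun x => ∫ t in a..x, deriv (deriv f) t
  have hG : ContinuousOn G (Icc a b) := by
    rw [← uIcc_of_le hab]
    refine intervalIntegral.continuousOn_primitive_interval ?_
    rwa [uIcc_of_le hab, integrableOn_Icc_iff_integrableOn_Ioo]
  have hf'_int : IntegrableOn (deriv f) (Ioo a b) :=
    ((continuousOn_const.add hG).integrableOn_Icc.mono_set Ioo_subset_Icc_self).congr_fun
      (fun x hx => (hc x hx).symm) measurableSet_Ioo
  obtain ⟨d, hd⟩ := exists_eq_add_integral_deriv hf hf'_int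
  refine ⟨c, d, fun x hx => ⟨hc x hx, ?_⟩⟩
  have hG_int : IntervalIntegrable G volume a x :=
    (hG.mono (uIcc_of_le hx.1.le ▸ Icc_subset_Icc_right hx.2.le)).intervalIntegrable
  have hf'_eq : ∀ᵐ t, t ∈ Ι a x → deriv f t = c + G t := by
    refine Eventually.of_forall fun t ht => hc t ?_
    rw [uIoc_of_le hx.1.le] at ht
    exact ⟨ht.1, ht.2.trans_lt hx.2⟩
  rw [hd x hx, intervalIntegral.integral_congr_ae hf'_eq,
    intervalIntegral.integral_add intervalIntegrable_const hG_int,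
    intervalIntegral.integral_const, add_assoc]

theorem norm_intervalIntegral_le_sqrt_mul_sqrt {g : ℝ → E} {a b : ℝ} (hab : a ≤ b)
    (hg : MemLp g 2 (volume.restrict (Ioc a b))) :
    ‖∫ t in a..b, g t‖ ≤ √(∫ t in a..b, ‖g t‖ ^ 2) * √(b - a) := by
  have hg' : MemLp (fun t => ‖g t‖) (ENNReal.ofReal 2) (volume.restrict (Ioc a b)) := by
    simpa using hg.norm
  have h1 : MemLp (fun _ => (1 : ℝ)) (ENNReal.ofReal 2) (volume.restrict (Ioc a b)) :=
    memLp_const 1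
  have holder := integral_mul_norm_le_Lp_mul_Lq Real.HolderConjugate.two_two hg' h1
  simp only [norm_norm, norm_one, mul_one, Real.one_rpow, integral_const] at holder
  rw [intervalIntegral.integral_of_le hab, intervalIntegral.integral_of_le hab,
    Real.sqrt_eq_rpow, Real.sqrt_eq_rpow]
  refine (norm_integral_le_integral_norm _).trans (holder.trans_eq ?_)
  simp [Measure.real, hab]

section SquareIntegrable

variable {g : ℝ → E} {b : ℝ}

theorem norm_primitive_le_sqrt_mul_rpow (hg : MemLp g 2 (volume.restrict (Ioo 0 b))) {x : ℝ}
    (hx : x ∈ Ioo 0 b) :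
    ‖∫ t in 0..x, g t‖ ≤ √(∫ t in 0..x, ‖g t‖ ^ 2) * x ^ (1 / 2 : ℝ) := by
  have hgx : MemLp g 2 (volume.restrict (Ioc 0 x)) :=
    hg.mono_measure (Measure.restrict_mono (Ioc_subset_Ioo_right hx.2) le_rfl)
  exact (norm_intervalIntegral_le_sqrt_mul_sqrt hx.1.le hgx).trans_eq
    (by rw [sub_zero, Real.sqrt_eq_rpow x])

theorem norm_iterated_primitive_le_sqrt_mul_rpow (hg : MemLp g 2 (volume.restrict (Ioo 0 b)))
    {x : ℝ} (hx : x ∈ Ioo 0 b) :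
    ‖∫ t in 0..x, ∫ s in 0..t, g s‖ ≤ √(∫ t in 0..x, ‖g t‖ ^ 2) * x ^ (3 / 2 : ℝ) := by
  have hint : IntervalIntegrable (fun t => ‖g t‖ ^ 2) volume 0 x :=
    (intervalIntegrable_iff_integrableOn_Ioc_of_le hx.1.le).2
      (IntegrableOn.mono_set (hg.integrable_norm_pow two_ne_zero) (Ioc_subset_Ioo_right hx.2))
  have hmono : ∀ t ∈ Ioc 0 x, √(∫ s in 0..t, ‖g s‖ ^ 2) ≤ √(∫ s in 0..x, ‖g s‖ ^ 2) := by
    intro t ht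
    exact Real.sqrt_le_sqrt (intervalIntegral.integral_mono_interval le_rfl ht.1.le ht.2
      (Eventually.of_forall fun _ => sq_nonneg _) hint)
  have hbound :
      ∀ t ∈ Ioc 0 x, ‖∫ s in 0..t, g s‖ ≤ √(∫ s in 0..x, ‖g s‖ ^ 2) * t ^ (1 / 2 : ℝ) :=
    fun t ht => (norm_primitive_le_sqrt_mul_rpow hg ⟨ht.1, ht.2.trans_lt hx.2⟩).trans
      (mul_le_mul_of_nonneg_right (hmono t ht) (Real.rpow_nonneg ht.1.le _))
  calc ‖∫ t in 0..x, ∫ s in 0..t, g s‖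
      ≤ ∫ t in 0..x, √(∫ s in 0..x, ‖g s‖ ^ 2) * t ^ (1 / 2 : ℝ) :=
        intervalIntegral.norm_integral_le_of_norm_le hx.1.le (Eventually.of_forall hbound)
          ((intervalIntegral.intervalIntegrable_rpow' (by norm_num)).const_mul _)
    _ = √(∫ s in 0..x, ‖g s‖ ^ 2) * (x ^ (3 / 2 : ℝ) / (3 / 2)) := by
        rw [intervalIntegral.integral_const_mul, integral_rpow (Or.inl (by norm_num)),
          Real.zero_rpow (by norm_num)]
        norm_num
    _ ≤ √(∫ s in 0..x, ‖g s‖ ^ 2) * x ^ (3 / 2 : ℝ) := by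
        gcongr
        linarith [Real.rpow_nonneg hx.1.le (3 / 2 : ℝ)]

theorem isLittleO_primitive_of_memLp_two (hb : 0 < b)
    (hg : MemLp g 2 (volume.restrict (Ioo 0 b))) :
    (fun x => ∫ t in 0..x, g t) =o[𝓝[>] 0] fun x => x ^ (1 / 2 : ℝ) := by
  refine isLittleO_of_norm_le_mul (tendsto_sqrt_integral_sq_norm_nhdsGT_zero hb hg) ?_
  filter_upwards [Ioo_mem_nhdsGT hb] with x hx
  rw [Real.norm_of_nonneg (Real.rpow_nonneg hx.1.le _)]
  exact norm_primitive_le_sqrt_mul_rpow hg hx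

theorem isLittleO_iterated_primitive_of_memLp_two (hb : 0 < b)
    (hg : MemLp g 2 (volume.restrict (Ioo 0 b))) :
    (fun x => ∫ t in 0..x, ∫ s in 0..t, g s) =o[𝓝[>] 0] fun x => x ^ (3 / 2 : ℝ) := by
  refine isLittleO_of_norm_le_mul (tendsto_sqrt_integral_sq_norm_nhdsGT_zero hb hg) ?_
  filter_upwards [Ioo_mem_nhdsGT hb] with x hx
  rw [Real.norm_of_nonneg (Real.rpow_nonneg hx.1.le _)]
  exact norm_iterated_primitive_le_sqrt_mul_rpow hg hx

end SquareIntegrable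

theorem not_integrableOn_Ioo_of_rpow_le {w : ℝ → ℝ} {b c s : ℝ} (hb : 0 < b) (hc : 0 < c)
    (hs : s ≤ -1) (hw : ∀ᶠ x in 𝓝[>] 0, c * x ^ s ≤ w x) : ¬ IntegrableOn w (Ioo 0 b) := by
  intro hint
  obtain ⟨δ, hδ, hδsub⟩ := mem_nhdsGT_iff_exists_Ioo_subset.1 (hw.and (Ioo_mem_nhdsGT hb))
  have hpow : IntegrableOn (fun x => c * x ^ s) (Ioo 0 δ) := by
    refine Integrable.mono' (hint.mono_set fun x hx => (hδsub hx).2) ?_ ?_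
    · exact (continuousOn_const.mul (continuousOn_id.rpow_const fun x hx => Or.inl hx.1.ne')
        ).aestronglyMeasurable measurableSet_Ioo
    · refine (ae_restrict_iff' measurableSet_Ioo).2 (Eventually.of_forall fun x hx => ?_)
      rw [Real.norm_of_nonneg (mul_nonneg hc.le (Real.rpow_nonneg hx.1.le s))]
      exact (hδsub hx).1
  exact (not_lt.2 hs) ((intervalIntegral.integrableOn_Ioo_rpow_iff hδ).1
    ((integrable_const_mul_iff hc.ne'.isUnit _).1 hpow))

theorem eq_zero_of_tendsto_rpow_neg_smul_of_integrableOn {f : ℝ → E} {c : E} {b k q : ℝ}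
    (hb : 0 < b) (hkq : 2 * k - q ≤ -1) (hf : Tendsto (fun x => x ^ (-k) • f x) (𝓝[>] 0) (𝓝 c))
    (hw : IntegrableOn (fun x => x ^ (-q) * ‖f x‖ ^ 2) (Ioo 0 b)) : c = 0 := by
  by_contra hc
  refine not_integrableOn_Ioo_of_rpow_le hb (c := (‖c‖ / 2) ^ 2) (by positivity) hkq ?_ hw
  filter_upwards [hf.norm.eventually (lt_mem_nhds (half_lt_self (norm_pos_iff.2 hc))),
    self_mem_nhdsWithin] with x hx (hx0 : 0 < x)
  rw [norm_smul, Real.norm_of_nonneg (by positivity)] at hx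
  have hfx : ‖c‖ / 2 * x ^ k ≤ ‖f x‖ := by
    calc ‖c‖ / 2 * x ^ k ≤ x ^ (-k) * ‖f x‖ * x ^ k := by gcongr
      _ = ‖f x‖ := by rw [Real.rpow_neg hx0.le]; field_simp
  calc (‖c‖ / 2) ^ 2 * x ^ (2 * k - q) = x ^ (-q) * (‖c‖ / 2 * x ^ k) ^ 2 := by
        rw [sub_eq_neg_add, Real.rpow_add hx0, mul_comm 2 k, Real.rpow_mul hx0.le,
          Real.rpow_two]
        ring
    _ ≤ x ^ (-q) * ‖f x‖ ^ 2 := by gcongr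

theorem eq_zero_of_eq_add_smul_add_of_integrableOn {f R : ℝ → E} {c d : E} {b q : ℝ}
    (hb : 0 < b) (hq : 3 ≤ q) (hf : ∀ᶠ x in 𝓝[>] 0, f x = d + x • c + R x)
    (hR : R =o[𝓝[>] 0] fun x => x)
    (hw : IntegrableOn (fun x => x ^ (-q) * ‖f x‖ ^ 2) (Ioo 0 b)) : d = 0 ∧ c = 0 := by
  have hid : Tendsto (fun x : ℝ => x) (𝓝[>] 0) (𝓝 0) := tendsto_id.mono_left nhdsWithin_le_nhds
  have hd : d = 0 := by
    refine eq_zero_of_tendsto_rpow_neg_smul_of_integrableOn hb (k := 0) (by linarith) ?_ hw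
    have hlim :=
      (tendsto_const_nhds (x := d)).add ((hid.smul_const c).add (hR.trans_tendsto hid))
    simp only [zero_smul, add_zero] at hlim
    refine hlim.congr' (hf.mono fun x hx => ?_)
    simp [hx, add_assoc]
  subst hd
  refine ⟨rfl, eq_zero_of_tendsto_rpow_neg_smul_of_integrableOn hb (k := 1) (by linarith) ?_ hw⟩
  have hlim := (tendsto_const_nhds (x := c)).add hR.tendsto_inv_smul_nhds_zero
  rw [add_zero] at hlim
  refine hlim.congr' ?_
  filter_upwards [hf, self_mem_nhdsWithin] with x hx (hx0 : 0 < x)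
  rw [hx, Real.rpow_neg_one, zero_add, smul_add, smul_smul, inv_mul_cancel₀ hx0.ne', one_smul]

theorem H2_weighted_vanishing_at_origin_general (α : ℝ) (hα0 : 0 ≤ α)
    (r : ℝ → ℂ)
    (hd1 : ∀ x ∈ Set.Ioo (0 : ℝ) 1, DifferentiableAt ℝ r x)
    (hd2 : ∀ x ∈ Set.Ioo (0 : ℝ) 1, DifferentiableAt ℝ (deriv r) x)
    (hw : IntegrableOn (fun x : ℝ => x ^ (-(3 + α)) * ‖r x‖ ^ 2) (Set.Ioo 0 1))
    (hd : IntegrableOn (fun x : ℝ => ‖deriv (deriv r) x‖ ^ 2) (Set.Ioo 0 1)) :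
    ((fun x : ℝ => r x) =o[𝓝[>] 0] fun x : ℝ => x ^ ((3 : ℝ) / 2)) ∧
    ((fun x : ℝ => deriv r x) =o[𝓝[>] 0] fun x : ℝ => x ^ ((1 : ℝ) / 2)) := by
  have hL2 : MemLp (deriv (deriv r)) 2 (volume.restrict (Ioo 0 1)) :=
    (memLp_two_iff_integrable_sq_norm (measurable_deriv _).aestronglyMeasurable).2 hd
  obtain ⟨c, d, hr'⟩ := exists_eq_add_smul_add_iterated_integral hd1 hd2
    (hL2.integrable one_le_two)
  have hIoo : ∀ᶠ x in 𝓝[>] (0 : ℝ), x ∈ Ioo 0 1 := Ioo_mem_nhdsGT one_pos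
  have hH := isLittleO_iterated_primitive_of_memLp_two one_pos hL2
  obtain ⟨rfl, rfl⟩ := eq_zero_of_eq_add_smul_add_of_integrableOn one_pos (by linarith)
    (hIoo.mono fun x hx => by rw [(hr' x hx).2, sub_zero])
    (hH.trans ((isLittleO_rpow_rpow_nhdsGT_zero (by norm_num : (1 : ℝ) < 3 / 2)).congr_right
      fun x => Real.rpow_one x)) hw
  constructor
  · refine hH.congr' (hIoo.mono fun x hx => ?_) EventuallyEq.rfl
    simp [(hr' x hx).2]
  · refine (isLittleO_primitive_of_memLp_two one_pos hL2).congr' (hIoo.mono fun x hx => ?_)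
      EventuallyEq.rfl
    simp [(hr' x hx).1]

/-- Let `α ∈ [0,1)` and let `r : (0,1) → ℂ` be twice continuously
differentiable with `∫₀¹ x^{−(3+α)} |r(x)|² dx < ∞` and `∫₀¹ |r''(x)|² dx < ∞`.  Then
`r(x) = o(x^{3/2})` and `r'(x) = o(x^{1/2})` as `x → 0⁺`. -/
theorem H2_weighted_vanishing_at_origin (α : ℝ) (hα0 : 0 ≤ α) (hα1 : α < 1)
    (r : ℝ → ℂ)
    (hd1 : ∀ x ∈ Set.Ioo (0 : ℝ) 1, DifferentiableAt ℝ r x)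
    (hd2 : ∀ x ∈ Set.Ioo (0 : ℝ) 1, DifferentiableAt ℝ (deriv r) x)
    (hd3 : ContinuousOn (deriv (deriv r)) (Set.Ioo (0 : ℝ) 1))
    (hw : IntegrableOn (fun x : ℝ => x ^ (-(3 + α)) * ‖r x‖ ^ 2) (Set.Ioo 0 1))
    (hd : IntegrableOn (fun x : ℝ => ‖deriv (deriv r) x‖ ^ 2) (Set.Ioo 0 1)) :
    ((fun x : ℝ => r x) =o[𝓝[>] 0] fun x : ℝ => x ^ ((3 : ℝ) / 2)) ∧
    ((fun x : ℝ => deriv r x) =o[𝓝[>] 0] fun x : ℝ => x ^ ((1 : ℝ) / 2)) :=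
  H2_weighted_vanishing_at_origin_general α hα0 r hd1 hd2 hw hd
end
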